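/- arXiv:1610.01980 — 9 statements merged into one kernel-verified Lean document; each statement's English description precedes it below -/
import Mathlib

section
/- Let a ∈ ℝ^d be a unit vector, k a positive integer, and b ∈ (ℝ^d)^{⊗k} a unit vector with ⟨a^{⊗k}, b⟩^2 ≥ 1−ε for some ε ∈ (0,1). Let B be the d×d^{k−1} matrix reshaping of b and let a' be a top left singular vector of B (a unit vector maximizing ‖Bᵀa'‖). Then ⟨a', a⟩^2 ≥ 1 − O(ε); concretely |⟨a,a'⟩| ≥ 1 − 3ε suffices. -/
open scoped BigOperators RealInnerProductSpace
open Matrix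

/-- Spectral (operator) norm of a real matrix. -/
noncomputable def specNorm {m n : Type*} [Fintype m] [Fintype n] [DecidableEq n]
    (A : Matrix m n ℝ) : ℝ :=
  ‖LinearMap.toContinuousLinearMap (Matrix.toEuclideanLin A)‖

lemma mulVec_bound {d : ℕ} {n : Type*} [Fintype n] [DecidableEq n]
    (B : Matrix (Fin d) n ℝ) (v : n → ℝ) :
    ∑ i, (∑ g, B i g * v g) ^ 2 ≤ specNorm B ^ 2 * ∑ g, v g ^ 2 := by
  have h := (LinearMap.toContinuousLinearMap (Matrix.toEuclideanLin B)).le_opNorm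
      ((WithLp.equiv 2 (n → ℝ)).symm v)
  rw [LinearMap.coe_toContinuousLinearMap'] at h
  change ‖(WithLp.equiv 2 (Fin d → ℝ)).symm (B *ᵥ v)‖ ≤ _ at h
  have h2 := pow_le_pow_left₀ (norm_nonneg _) h 2
  rw [mul_pow] at h2
  have hL : ‖(WithLp.equiv 2 (Fin d → ℝ)).symm (B *ᵥ v)‖ ^ 2 = ∑ i, (∑ g, B i g * v g) ^ 2 := by
    rw [EuclideanSpace.norm_eq, Real.sq_sqrt (Finset.sum_nonneg fun i _ => sq_nonneg _)]
    simp [Matrix.mulVec, dotProduct, sq_abs]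
  have hR : ‖(WithLp.equiv 2 (n → ℝ)).symm v‖ ^ 2 = ∑ g, v g ^ 2 := by
    rw [EuclideanSpace.norm_eq, Real.sq_sqrt (Finset.sum_nonneg fun i _ => sq_nonneg _)]
    simp [sq_abs]
  rw [hL, hR] at h2
  exact h2

lemma vecMul_bound {d : ℕ} {n : Type*} [Fintype n] [DecidableEq n]
    (B : Matrix (Fin d) n ℝ) (x : Fin d → ℝ) :
    ∑ g, (∑ i, B i g * x i) ^ 2 ≤ specNorm B ^ 2 * ∑ i, x i ^ 2 := by
  have gen : ∀ T : n → ℝ, (∀ g, T g = ∑ i, B i g * x i) →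
      ∑ g, T g ^ 2 = ∑ i, x i * ∑ g, B i g * T g := by
    intro T hT
    calc ∑ g, T g ^ 2 = ∑ g, ∑ i, x i * (B i g * T g) := by
          refine Finset.sum_congr rfl fun g _ => ?_
          have h1 : ∑ i, x i * (B i g * T g) = (∑ i, B i g * x i) * T g := by
            rw [Finset.sum_mul]; exact Finset.sum_congr rfl fun i _ => by ring
          rw [h1, ← hT g, pow_two]
      _ = ∑ i, ∑ g, x i * (B i g * T g) := Finset.sum_comm
      _ = ∑ i, x i * ∑ g, B i g * T g := by
          exact Finset.sum_congr rfl fun i _ => (Finset.mul_sum _ _ _).symm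
  set T : n → ℝ := fun g => ∑ i, B i g * x i with hT
  have hkey : ∑ g, T g ^ 2 = ∑ i, x i * ∑ g, B i g * T g := gen T fun g => rfl
  have hQnn : (0:ℝ) ≤ ∑ g, T g ^ 2 := Finset.sum_nonneg fun _ _ => sq_nonneg _
  have hcs : (∑ g, T g ^ 2) ^ 2 ≤ (∑ i, x i ^ 2) * ∑ i, (∑ g, B i g * T g) ^ 2 := by
    rw [hkey]; exact Finset.sum_mul_sq_le_sq_mul_sq _ _ _
  have hmv : ∑ i, (∑ g, B i g * T g) ^ 2 ≤ specNorm B ^ 2 * ∑ g, T g ^ 2 := mulVec_bound B T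
  have hxnn : (0:ℝ) ≤ ∑ i, x i ^ 2 := Finset.sum_nonneg fun _ _ => sq_nonneg _
  show ∑ g, T g ^ 2 ≤ _
  rcases eq_or_lt_of_le hQnn with h0 | h0
  · rw [← h0]; positivity
  · nlinarith [mul_le_mul_of_nonneg_left hmv hxnn]

lemma unit_sum_sq {d : ℕ} (a : EuclideanSpace ℝ (Fin d)) (ha : ‖a‖ = 1) :
    ∑ i, a i ^ 2 = 1 := by
  have h := EuclideanSpace.norm_eq a
  rw [ha] at h
  have h2 := Real.sqrt_eq_one.mp h.symm
  simpa [Real.norm_eq_abs, sq_abs] using h2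

lemma sum_cons_reindex {d k : ℕ} (φ : (Fin (k+1) → Fin d) → ℝ) :
    ∑ f, φ f = ∑ i, ∑ g, φ (Fin.cons i g) := by
  rw [← (Fin.consEquiv (fun _ => Fin d)).sum_comp φ, Fintype.sum_prod_type]
  rfl

lemma bessel_aux {d : ℕ} (W : ℝ) (hW : 0 < W) (c a' w : Fin d → ℝ)
    (hna' : ∑ i, a' i ^ 2 = 1) (hwsq : ∑ i, w i ^ 2 = W)
    (horth : ∑ i, a' i * w i = 0) :
    W * (∑ i, c i * a' i) ^ 2 + (∑ i, c i * w i) ^ 2 ≤ W * ∑ i, c i ^ 2 := by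
  set α := ∑ i, c i * a' i with hα
  set β := ∑ i, c i * w i with hβ
  have hr : (0:ℝ) ≤ ∑ i, (W * c i - W * α * a' i - β * w i) ^ 2 :=
    Finset.sum_nonneg fun _ _ => sq_nonneg _
  have hexp : ∑ i, (W * c i - W * α * a' i - β * w i) ^ 2
      = W^2 * (∑ i, c i ^ 2) + W^2 * α^2 * (∑ i, a' i ^ 2) + β^2 * (∑ i, w i ^ 2)
        - 2*W^2*α * (∑ i, c i * a' i) - 2*W*β * (∑ i, c i * w i)
        + 2*W*α*β * (∑ i, a' i * w i) := by
    simp only [Finset.mul_sum, ← Finset.sum_add_distrib, ← Finset.sum_sub_distrib]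
    exact Finset.sum_congr rfl fun i _ => by ring
  rw [hexp, hna', hwsq, horth, ← hα, ← hβ] at hr
  nlinarith [hr, hW]

set_option maxHeartbeats 2000000 in
theorem stmt_5 (d k : ℕ) (ε : ℝ) (hε : ε ∈ Set.Ioo (0 : ℝ) 1)
    (a : EuclideanSpace ℝ (Fin d)) (ha : ‖a‖ = 1)
    (b : (Fin (k + 1) → Fin d) → ℝ) (hb : Real.sqrt (∑ f, b f ^ 2) = 1)
    (hcorr : (∑ f, (∏ j, a (f j)) * b f) ^ 2 ≥ 1 - ε)
    (B : Matrix (Fin d) (Fin k → Fin d) ℝ)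
    (hB : B = Matrix.of fun i g => b (Fin.cons i g))
    (a' : EuclideanSpace ℝ (Fin d)) (ha' : ‖a'‖ = 1)
    (htop : Real.sqrt (∑ g, (∑ i, B i g * a' i) ^ 2) = specNorm B) :
    |⟪a, a'⟫| ≥ 1 - 3 * ε := by
  obtain ⟨hε0, hε1⟩ := hε
  rcases le_or_gt (1/3 : ℝ) ε with h13 | h13
  · have h0 : 1 - 3*ε ≤ 0 := by linarith
    exact le_trans h0 (abs_nonneg _)
  have htdef : ⟪a, a'⟫ = ∑ i, a i * a' i := by
    simp [PiLp.inner_apply, RCLike.inner_apply, conj_trivial, mul_comm]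
  rw [htdef]
  have hna : ∑ i, a i ^ 2 = 1 := unit_sum_sq a ha
  have hna' : ∑ i, a' i ^ 2 = 1 := unit_sum_sq a' ha'
  have hbsum : ∑ f, b f ^ 2 = 1 := Real.sqrt_eq_one.mp hb
  have hBij : ∀ i g, B i g = b (Fin.cons i g) := fun i g => by rw [hB]; rfl
  obtain ⟨t, hts⟩ : ∃ x : ℝ, ∑ i, a i * a' i = x := ⟨_, rfl⟩
  rw [hts]
  have ht1 : t ^ 2 ≤ 1 := by
    have hcs := Finset.sum_mul_sq_le_sq_mul_sq Finset.univ (fun i => a i) (fun i => a' i)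
    rw [hna, hna', one_mul, hts] at hcs
    exact hcs
  -- the orthogonal part w
  obtain ⟨w, hwdef⟩ : ∃ w : Fin d → ℝ, ∀ i, w i = a i - t * a' i := ⟨_, fun _ => rfl⟩
  have horth : ∑ i, a' i * w i = 0 := by
    calc ∑ i, a' i * w i = ∑ i, (a i * a' i - t * a' i ^ 2) :=
          Finset.sum_congr rfl fun i _ => by rw [hwdef i]; ring
      _ = (∑ i, a i * a' i) - t * ∑ i, a' i ^ 2 := by
          rw [Finset.sum_sub_distrib, ← Finset.mul_sum]
      _ = 0 := by rw [hts, hna']; ring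
  have hwsq : ∑ i, w i ^ 2 = 1 - t ^ 2 := by
    calc ∑ i, w i ^ 2 = ∑ i, (a i ^ 2 - 2*t*(a i * a' i) + t^2 * a' i ^ 2) :=
          Finset.sum_congr rfl fun i _ => by rw [hwdef i]; ring
      _ = (∑ i, a i ^ 2) - 2*t*(∑ i, a i * a' i) + t^2 * ∑ i, a' i ^ 2 := by
          rw [Finset.sum_add_distrib, Finset.sum_sub_distrib, ← Finset.mul_sum, ← Finset.mul_sum]
      _ = 1 - t ^ 2 := by rw [hna, hna', hts]; ring
  -- lam = top singular value squared
  obtain ⟨lam, hlam⟩ : ∃ x : ℝ, ∑ g, (∑ i, B i g * a' i) ^ 2 = x := ⟨_, rfl⟩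
  have hlamnn : (0:ℝ) ≤ lam := by
    rw [← hlam]; exact Finset.sum_nonneg fun _ _ => sq_nonneg _
  have hlam_spec : lam = specNorm B ^ 2 := by
    rw [← htop, Real.sq_sqrt (by rw [hlam]; exact hlamnn)]
    exact hlam.symm
  have hmax : ∀ x : Fin d → ℝ, ∑ g, (∑ i, B i g * x i) ^ 2 ≤ lam * ∑ i, x i ^ 2 := by
    intro x; rw [hlam_spec]; exact vecMul_bound B x
  -- Frobenius norm is 1
  have hfro : ∑ g, ∑ i, B i g ^ 2 = 1 := by
    rw [Finset.sum_comm]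
    have h1 : ∑ i, ∑ g, B i g ^ 2 = ∑ i, ∑ g, b (Fin.cons i g) ^ 2 :=
      Finset.sum_congr rfl fun i _ => Finset.sum_congr rfl fun g _ => by rw [hBij]
    rw [h1, ← sum_cons_reindex (fun f => b f ^ 2), hbsum]
  -- correlation rewrite
  have hc : ∑ f, (∏ j, a (f j)) * b f
      = ∑ g, (∏ j, a (g j)) * (∑ i, B i g * a i) := by
    rw [sum_cons_reindex (fun f => (∏ j, a (f j)) * b f), Finset.sum_comm]
    refine Finset.sum_congr rfl fun g _ => ?_
    rw [Finset.mul_sum]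
    refine Finset.sum_congr rfl fun i _ => ?_
    rw [Fin.prod_univ_succ, Fin.cons_zero]
    have h : ∀ j : Fin k, (Fin.cons i g : Fin (k+1) → Fin d) j.succ = g j := fun j =>
      Fin.cons_succ (α := fun _ : Fin (k+1) => Fin d) i g j
    rw [Finset.prod_congr rfl fun j _ => by rw [h j], hBij]
    ring
  -- Q a ≥ 1 - ε
  have hpk : ∑ g : Fin k → Fin d, (∏ j, a (g j)) ^ 2 = 1 := by
    have h1 : ∀ g : Fin k → Fin d, (∏ j, a (g j)) ^ 2 = ∏ j, a (g j) ^ 2 := by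
      intro g; rw [← Finset.prod_pow]
    rw [Finset.sum_congr rfl fun g _ => h1 g, ← Fintype.sum_pow (fun i => a i ^ 2) k, hna,
      one_pow]
  have hQa_ge : 1 - ε ≤ ∑ g, (∑ i, B i g * a i) ^ 2 := by
    have hcs := Finset.sum_mul_sq_le_sq_mul_sq Finset.univ
      (fun g : Fin k → Fin d => ∏ j, a (g j)) (fun g => ∑ i, B i g * a i)
    rw [← hc, hpk, one_mul] at hcs
    linarith [hcorr]
  have hQa_le : ∑ g, (∑ i, B i g * a i) ^ 2 ≤ lam := by
    have h1 := hmax a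
    rwa [hna, mul_one] at h1
  have hlam_ge : 1 - ε ≤ lam := le_trans hQa_ge hQa_le
  have hlam_le : lam ≤ 1 := by
    have h1 : ∑ g, (∑ i, B i g * a' i) ^ 2 ≤ ∑ g, ((∑ i, B i g ^ 2) * ∑ i, a' i ^ 2) :=
      Finset.sum_le_sum fun g _ => Finset.sum_mul_sq_le_sq_mul_sq _ _ _
    have h2 : ∑ g, ((∑ i, B i g ^ 2) * ∑ i, a' i ^ 2) = 1 := by
      rw [Finset.sum_congr rfl fun g _ => by rw [hna', mul_one], hfro]
    rw [hlam, h2] at h1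
    exact h1
  obtain ⟨S, hS⟩ : ∃ x : ℝ, ∑ g, (∑ i, B i g * a' i) * (∑ i, B i g * w i) = x := ⟨_, rfl⟩
  obtain ⟨Qw, hQw⟩ : ∃ x : ℝ, ∑ g, (∑ i, B i g * w i) ^ 2 = x := ⟨_, rfl⟩
  have hQwnn : 0 ≤ Qw := by
    rw [← hQw]; exact Finset.sum_nonneg fun _ _ => sq_nonneg _
  have hCle : Qw ≤ lam * (1 - t ^ 2) := by
    have h1 := hmax w
    rwa [hwsq, hQw] at h1
  -- perturbation: a' is a top eigenvector, so S = 0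
  have hpert : ∀ u : ℝ, lam + 2*u*S + u^2*Qw ≤ lam * (1 + u^2 * (1 - t^2)) := by
    intro u
    have h1 := hmax (fun i => a' i + u * w i)
    have hTe : ∀ g, ∑ i, B i g * (a' i + u * w i)
        = (∑ i, B i g * a' i) + u * ∑ i, B i g * w i := by
      intro g
      calc ∑ i, B i g * (a' i + u * w i) = ∑ i, (B i g * a' i + u * (B i g * w i)) :=
            Finset.sum_congr rfl fun i _ => by ring
        _ = _ := by rw [Finset.sum_add_distrib, ← Finset.mul_sum]
    have hL : ∑ g, (∑ i, B i g * (a' i + u * w i)) ^ 2 = lam + 2*u*S + u^2*Qw := by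
      calc ∑ g, (∑ i, B i g * (a' i + u * w i)) ^ 2
          = ∑ g, ((∑ i, B i g * a' i) + u * ∑ i, B i g * w i) ^ 2 :=
            Finset.sum_congr rfl fun g _ => by rw [hTe g]
        _ = ∑ g, ((∑ i, B i g * a' i) ^ 2
              + 2*u*((∑ i, B i g * a' i) * ∑ i, B i g * w i)
              + u^2*(∑ i, B i g * w i) ^ 2) :=
            Finset.sum_congr rfl fun g _ => by ring
        _ = (∑ g, (∑ i, B i g * a' i) ^ 2)
              + 2*u*(∑ g, (∑ i, B i g * a' i) * ∑ i, B i g * w i)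
              + u^2*(∑ g, (∑ i, B i g * w i) ^ 2) := by
            rw [Finset.sum_add_distrib, Finset.sum_add_distrib, ← Finset.mul_sum,
              ← Finset.mul_sum]
        _ = lam + 2*u*S + u^2*Qw := by rw [hlam, hS, hQw]
    have hR : ∑ i, (a' i + u * w i) ^ 2 = 1 + u^2 * (1 - t^2) := by
      calc ∑ i, (a' i + u * w i) ^ 2
          = ∑ i, (a' i ^ 2 + 2*u*(a' i * w i) + u^2 * w i ^ 2) :=
            Finset.sum_congr rfl fun i _ => by ring
        _ = (∑ i, a' i ^ 2) + 2*u*(∑ i, a' i * w i) + u^2 * ∑ i, w i ^ 2 := by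
            rw [Finset.sum_add_distrib, Finset.sum_add_distrib, ← Finset.mul_sum,
              ← Finset.mul_sum]
        _ = 1 + u^2 * (1 - t^2) := by rw [hna', horth, hwsq]; ring
    rw [hL, hR] at h1
    exact h1
  have hSzero : S = 0 := by
    by_contra hne
    have hlin : ∀ u : ℝ, 2*u*S ≤ u^2 * (lam*(1-t^2) - Qw) := by
      intro u
      have h1 := hpert u
      nlinarith only [h1]
    obtain ⟨C, hCdef⟩ : ∃ x : ℝ, lam*(1-t^2) - Qw = x := ⟨_, rfl⟩
    rw [hCdef] at hlin
    have hCnn : 0 ≤ C := by rw [← hCdef]; linarith [hCle]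
    have hposd : (0:ℝ) < C + 1 := by linarith
    obtain ⟨q, hqdef⟩ : ∃ x : ℝ, S / (C + 1) = x := ⟨_, rfl⟩
    have hq : S = q * (C + 1) := by
      rw [← hqdef]; field_simp
    have hqne : q ≠ 0 := by
      rw [← hqdef]; exact div_ne_zero hne (ne_of_gt hposd)
    have hqsq : 0 < q ^ 2 := by positivity
    have h5 := hlin q
    rw [hq] at h5
    nlinarith only [h5, hqsq, hCnn]
  -- decomposition of Q a
  have hdecomp : ∑ g, (∑ i, B i g * a i) ^ 2 = t^2*lam + 2*t*S + Qw := by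
    have hsplit : ∀ g, ∑ i, B i g * a i
        = t*(∑ i, B i g * a' i) + ∑ i, B i g * w i := by
      intro g
      calc ∑ i, B i g * a i = ∑ i, (t*(B i g * a' i) + B i g * w i) :=
            Finset.sum_congr rfl fun i _ => by rw [hwdef i]; ring
        _ = _ := by rw [Finset.sum_add_distrib, ← Finset.mul_sum]
    calc ∑ g, (∑ i, B i g * a i) ^ 2
        = ∑ g, (t*(∑ i, B i g * a' i) + ∑ i, B i g * w i) ^ 2 :=
          Finset.sum_congr rfl fun g _ => by rw [hsplit g]
      _ = ∑ g, (t^2*(∑ i, B i g * a' i) ^ 2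
            + 2*t*((∑ i, B i g * a' i) * ∑ i, B i g * w i)
            + (∑ i, B i g * w i) ^ 2) :=
          Finset.sum_congr rfl fun g _ => by ring
      _ = t^2*(∑ g, (∑ i, B i g * a' i) ^ 2)
            + 2*t*(∑ g, (∑ i, B i g * a' i) * ∑ i, B i g * w i)
            + (∑ g, (∑ i, B i g * w i) ^ 2) := by
          rw [Finset.sum_add_distrib, Finset.sum_add_distrib, ← Finset.mul_sum,
            ← Finset.mul_sum]
      _ = t^2*lam + 2*t*S + Qw := by rw [hlam, hS, hQw]
  have hfinal : 1 - ε ≤ t^2*lam + Qw := by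
    rw [hdecomp, hSzero] at hQa_ge
    linarith [hQa_ge]
  rcases eq_or_lt_of_le ht1 with hteq | htlt
  · -- t² = 1
    have hfac : (|t| - 1) * (|t| + 1) = 0 := by
      linear_combination sq_abs t + hteq
    rcases mul_eq_zero.mp hfac with h1 | h1
    · have : |t| = 1 := by linarith
      rw [this]; linarith
    · have h2 := abs_nonneg t
      linarith
  · -- 1 - t² > 0
    have hWpos : 0 < 1 - t^2 := by linarith
    have hbessel : lam * (1 - t^2) + Qw ≤ 1 - t^2 := by
      have hper : ∀ g : Fin k → Fin d,
          (1-t^2)*(∑ i, B i g * a' i)^2 + (∑ i, B i g * w i)^2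
            ≤ (1-t^2) * ∑ i, B i g ^ 2 := by
        intro g
        exact bessel_aux (1-t^2) hWpos (fun i => B i g) (fun i => a' i) w hna'
          (by rw [hwsq]) horth
      have hsum := Finset.sum_le_sum fun g (_ : g ∈ Finset.univ) => hper g
      have hLS : ∑ g, ((1-t^2)*(∑ i, B i g * a' i)^2 + (∑ i, B i g * w i)^2)
          = lam * (1-t^2) + Qw := by
        rw [Finset.sum_add_distrib, ← Finset.mul_sum, hlam, hQw]; ring
      have hRS : ∑ g : Fin k → Fin d, (1-t^2) * ∑ i, B i g ^ 2 = 1-t^2 := by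
        rw [← Finset.mul_sum, hfro, mul_one]
      rw [hLS, hRS] at hsum
      exact hsum
    have e1 : Qw ≤ (1 - lam) * (1 - t^2) := by nlinarith only [hbessel]
    have hkey2 : (1-3*ε)^2*(2*lam-1) ≤ lam - ε := by
      rcases le_or_gt 0 (1 - 12*ε + 18*ε^2) with hco | hco
      · nlinarith only [mul_nonneg (sub_nonneg.2 hlam_le) hco,
          mul_pos hε0 (by linarith : (0:ℝ) < 5 - 9*ε)]
      · have hmono : ε * (1 - 12*ε + 18*ε^2) ≤ (1 - lam) * (1 - 12*ε + 18*ε^2) := by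
          apply mul_le_mul_of_nonpos_right _ hco.le
          linarith
        nlinarith only [hmono, mul_pos hε0 (mul_pos (by linarith : (0:ℝ) < 1 - 2*ε)
          (by linarith : (0:ℝ) < 2 - 3*ε))]
    have h2lam : 0 < 2*lam - 1 := by linarith
    have hP : lam - ε ≤ t^2*(2*lam-1) := by nlinarith only [hfinal, e1]
    have htsq : (1-3*ε)^2 ≤ t^2 := by nlinarith only [hP, hkey2, h2lam]
    calc 1 - 3*ε = Real.sqrt ((1 - 3*ε)^2) := (Real.sqrt_sq (by linarith)).symm
      _ ≤ Real.sqrt (t^2) := Real.sqrt_le_sqrt htsq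
      _ = |t| := Real.sqrt_sq_eq_abs t
end

section
/- Let C be a d×n real matrix with columns c_1,...,c_n satisfying ‖CᵀC − Id_n‖ ≤ δ for some δ ≤ 1. Let V ⊆ ℝ^{d^2} be the span of the vectors c_1^{⊗2},...,c_n^{⊗2}, and let Id_V be the orthogonal projection onto V. Then ‖∑_{i=1}^n c_i^{⊗2}(c_i^{⊗2})ᵀ − Id_V‖ ≤ 3δ. -/
open scoped BigOperators Matrix

/-!
Write `t i = c_i ⊗ c_i` and `Cᵀ C = 1 + E`. Since `⟪t i, t j⟫ = (Cᵀ C)ᵢⱼ²`, the Gram matrix of the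
`t i` is `1 + 2 diag E + E ⊙ E`; the diagonal entries of `E` are at most `δ`, and Cauchy–Schwarz
with the row and column norms of `E` (all at most `‖E‖ ≤ δ`) bounds the quadratic form of `E ⊙ E`
by `δ²`. So the `t i` form a near-orthonormal family:
`|‖∑ aᵢ tᵢ‖² - ‖a‖²| ≤ β ‖a‖²` with `β = 2δ + δ² ≤ 3δ`.

For any such family, the quadratic form `∑ ⟪t i, x⟫²` of the frame operator only sees the
projection `v` of `x` onto the span, and there it lies between `(1 - β) ‖v‖²` (write `v = ∑ aᵢ tᵢ`
and apply Cauchy–Schwarz to `‖v‖² = ∑ aᵢ ⟪t i, v⟫`) and `(1 + β) ‖v‖²` (Bessel's inequality from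
the upper bound on `‖∑ aᵢ tᵢ‖`). Hence the symmetric operator `∑ t i t iᵀ - P_V` has norm at most `β`.
-/

open scoped RealInnerProductSpace
open Finset InnerProductSpace

theorem ContinuousLinearMap.opNorm_le_of_abs_inner_self_le {E : Type*} [NormedAddCommGroup E]
    [InnerProductSpace ℝ E] {T : E →L[ℝ] E} (hT : T.IsSymmetric) {c : ℝ} (hc : 0 ≤ c)
    (h : ∀ x, |⟪T x, x⟫| ≤ c * ‖x‖ ^ 2) : ‖T‖ ≤ c := by
  rw [T.norm_eq_iSup_rayleighQuotient hT]
  refine ciSup_le fun x => ?_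
  rcases eq_or_ne x 0 with rfl | hx
  · simpa using hc
  rw [rayleighQuotient, reApplyInnerSelf_apply, RCLike.re_to_real, abs_div, abs_sq,
    div_le_iff₀ (by positivity)]
  exact h x

section FrameBounds

variable {ι F : Type*} [Fintype ι] [NormedAddCommGroup F] [InnerProductSpace ℝ F]

theorem sum_inner_sq_le_of_norm_sum_smul_sq_le {t : ι → F} {B : ℝ} (hB : 0 ≤ B)
    (h : ∀ a : ι → ℝ, ‖∑ i, a i • t i‖ ^ 2 ≤ B * ∑ i, a i ^ 2) (v : F) :
    ∑ i, ⟪t i, v⟫ ^ 2 ≤ B * ‖v‖ ^ 2 := by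
  set Q := ∑ i, ⟪t i, v⟫ ^ 2
  set w := ∑ i, ⟪t i, v⟫ • t i
  have hQ : Q = ⟪v, w⟫ := by
    simp only [Q, w, inner_sum, real_inner_smul_right, real_inner_comm v, sq]
  have hQ0 : 0 ≤ Q := by positivity
  have hQw : Q ≤ ‖v‖ * ‖w‖ := hQ ▸ real_inner_le_norm v w
  have hQ2 : Q * Q ≤ Q * (B * ‖v‖ ^ 2) :=
    calc Q * Q ≤ (‖v‖ * ‖w‖) * (‖v‖ * ‖w‖) := mul_self_le_mul_self hQ0 hQw
      _ = ‖v‖ ^ 2 * ‖w‖ ^ 2 := by ring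
      _ ≤ ‖v‖ ^ 2 * (B * Q) := by gcongr; exact h _
      _ = Q * (B * ‖v‖ ^ 2) := by ring
  rcases hQ0.eq_or_lt with hQ0 | hQpos
  · rw [← hQ0]; positivity
  · exact le_of_mul_le_mul_left hQ2 hQpos

theorem mul_norm_sq_le_sum_inner_sq_of_mem_span {t : ι → F} {A : ℝ} (hA : 0 ≤ A)
    (h : ∀ a : ι → ℝ, A * ∑ i, a i ^ 2 ≤ ‖∑ i, a i • t i‖ ^ 2) {v : F}
    (hv : v ∈ Submodule.span ℝ (Set.range t)) :
    A * ‖v‖ ^ 2 ≤ ∑ i, ⟪t i, v⟫ ^ 2 := by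
  obtain ⟨a, ha⟩ := (Submodule.mem_span_range_iff_exists_fun ℝ).mp hv
  set Q := ∑ i, ⟪t i, v⟫ ^ 2
  have hs : ‖v‖ ^ 2 = ∑ i, a i * ⟪t i, v⟫ := by
    rw [← real_inner_self_eq_norm_sq]
    nth_rw 1 [← ha]
    simp only [sum_inner, real_inner_smul_left]
  have hcs : (‖v‖ ^ 2) ^ 2 ≤ (∑ i, a i ^ 2) * Q := hs ▸ sum_mul_sq_le_sq_mul_sq _ _ _
  have hAs : ‖v‖ ^ 2 * (A * ‖v‖ ^ 2) ≤ ‖v‖ ^ 2 * Q :=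
    calc ‖v‖ ^ 2 * (A * ‖v‖ ^ 2) = A * (‖v‖ ^ 2) ^ 2 := by ring
      _ ≤ A * (∑ i, a i ^ 2) * Q := by rw [mul_assoc]; gcongr
      _ ≤ ‖v‖ ^ 2 * Q := by gcongr; exact ha ▸ h a
  rcases (sq_nonneg ‖v‖).eq_or_lt with hs0 | hspos
  · rw [← hs0, mul_zero]; positivity
  · exact le_of_mul_le_mul_left hAs hspos

theorem abs_sum_inner_sq_sub_norm_sq_le {t : ι → F} {β : ℝ} (hβ : 0 ≤ β)
    (h : ∀ a : ι → ℝ, |‖∑ i, a i • t i‖ ^ 2 - ∑ i, a i ^ 2| ≤ β * ∑ i, a i ^ 2) {v : F}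
    (hv : v ∈ Submodule.span ℝ (Set.range t)) :
    |∑ i, ⟪t i, v⟫ ^ 2 - ‖v‖ ^ 2| ≤ β * ‖v‖ ^ 2 := by
  have hupper := sum_inner_sq_le_of_norm_sum_smul_sq_le (B := 1 + β) (by positivity)
    (fun a => by linarith [(abs_le.mp (h a)).2]) v
  rw [abs_le]
  refine ⟨?_, by linarith⟩
  rcases le_total β 1 with hβ1 | hβ1
  · have hlower := mul_norm_sq_le_sum_inner_sq_of_mem_span (sub_nonneg.mpr hβ1)
      (fun a => by linarith [(abs_le.mp (h a)).1]) hv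
    linarith
  · have hQ0 : 0 ≤ ∑ i, ⟪t i, v⟫ ^ 2 := by positivity
    have := mul_le_mul_of_nonneg_right hβ1 (sq_nonneg ‖v‖)
    linarith

theorem norm_sum_rankOne_sub_starProjection_le {t : ι → F} {β : ℝ} (hβ : 0 ≤ β)
    (h : ∀ a : ι → ℝ, |‖∑ i, a i • t i‖ ^ 2 - ∑ i, a i ^ 2| ≤ β * ∑ i, a i ^ 2)
    [(Submodule.span ℝ (Set.range t)).HasOrthogonalProjection] :
    ‖∑ i, rankOne ℝ (t i) (t i) - (Submodule.span ℝ (Set.range t)).starProjection‖ ≤ β := by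
  set K := Submodule.span ℝ (Set.range t)
  have hsymm : (∑ i, rankOne ℝ (t i) (t i) - K.starProjection).IsSymmetric := by
    rw [ContinuousLinearMap.toLinearMap_sub, ContinuousLinearMap.toLinearMap_sum]
    exact (LinearMap.isSymmetric_sum _ fun i _ => isSymmetric_rankOne_self (t i)).sub
      K.starProjection_isSymmetric
  refine ContinuousLinearMap.opNorm_le_of_abs_inner_self_le hsymm hβ fun x => ?_
  have hproj : ∀ i, ⟪t i, x⟫ = ⟪t i, K.starProjection x⟫ := fun i => by
    rw [← K.inner_starProjection_left_eq_right,
      K.starProjection_eq_self_iff.mpr (Submodule.subset_span ⟨i, rfl⟩)]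
  have hT : ⟪(∑ i, rankOne ℝ (t i) (t i)) x, x⟫ = ∑ i, ⟪t i, K.starProjection x⟫ ^ 2 := by
    simp only [_root_.sum_apply, rankOne_apply, sum_inner, real_inner_smul_left, hproj, sq]
  have hP : ⟪K.starProjection x, x⟫ = ‖K.starProjection x‖ ^ 2 :=
    calc ⟪K.starProjection x, x⟫ = ⟪K.starProjection (K.starProjection x), x⟫ := by
          rw [K.starProjection_eq_self_iff.mpr (K.starProjection_apply_mem x)]
      _ = ‖K.starProjection x‖ ^ 2 := by
          rw [K.inner_starProjection_left_eq_right, real_inner_self_eq_norm_sq]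
  rw [sub_apply, inner_sub_left, hT, hP]
  calc _ ≤ β * ‖K.starProjection x‖ ^ 2 :=
        abs_sum_inner_sq_sub_norm_sq_le hβ h (K.starProjection_apply_mem x)
    _ ≤ β * ‖x‖ ^ 2 := by gcongr; exact K.norm_starProjection_apply_le x

end FrameBounds

section GramBounds

variable {ι : Type*} [Fintype ι]

theorem abs_sum_sum_mul_mul_sq_le (E : Matrix ι ι ℝ) {δ : ℝ}
    (hrow : ∀ i, ∑ j, E i j ^ 2 ≤ δ ^ 2) (hcol : ∀ j, ∑ i, E i j ^ 2 ≤ δ ^ 2) (a : ι → ℝ) :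
    |∑ i, ∑ j, a i * a j * E i j ^ 2| ≤ δ ^ 2 * ∑ i, a i ^ 2 := by
  have hf : ∑ p : ι × ι, (a p.1 * E p.1 p.2) ^ 2 ≤ δ ^ 2 * ∑ i, a i ^ 2 := by
    simp only [Fintype.sum_prod_type, mul_pow, ← mul_sum, mul_comm (δ ^ 2), sum_mul]
    exact sum_le_sum fun i _ => by gcongr; exact hrow i
  have hg : ∑ p : ι × ι, (a p.2 * E p.1 p.2) ^ 2 ≤ δ ^ 2 * ∑ i, a i ^ 2 := by
    simp only [Fintype.sum_prod_type_right, mul_pow, ← mul_sum, mul_comm (δ ^ 2), sum_mul]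
    exact sum_le_sum fun j _ => by gcongr; exact hcol j
  have hcs := sum_mul_sq_le_sq_mul_sq univ (fun p : ι × ι => a p.1 * E p.1 p.2)
    fun p => a p.2 * E p.1 p.2
  have hprod : ∑ i, ∑ j, a i * a j * E i j ^ 2
      = ∑ p : ι × ι, a p.1 * E p.1 p.2 * (a p.2 * E p.1 p.2) := by
    rw [Fintype.sum_prod_type]; congr! 2; ring
  rw [hprod]
  refine abs_le_of_sq_le_sq (hcs.trans ?_) (by positivity)
  rw [sq]
  exact mul_le_mul hf hg (by positivity) (by positivity)

variable {F : Type*} [NormedAddCommGroup F] [InnerProductSpace ℝ F]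

theorem norm_sum_smul_sq_eq_sum_sum (t : ι → F) (a : ι → ℝ) :
    ‖∑ i, a i • t i‖ ^ 2 = ∑ i, ∑ j, a i * a j * ⟪t i, t j⟫ := by
  simp only [← real_inner_self_eq_norm_sq, sum_inner, inner_sum, real_inner_smul_left,
    real_inner_smul_right, mul_assoc]
  exact sum_congr rfl fun i _ => sum_congr rfl fun j _ => by rw [real_inner_comm]

theorem abs_norm_sum_smul_sq_sub_le_of_inner_eq_sq {t : ι → F} [DecidableEq ι]
    (E : Matrix ι ι ℝ) {δ : ℝ} (hδ : 0 ≤ δ) (ht : ∀ i j, ⟪t i, t j⟫ = (1 + E) i j ^ 2)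
    (hrow : ∀ i, ∑ j, E i j ^ 2 ≤ δ ^ 2) (hcol : ∀ j, ∑ i, E i j ^ 2 ≤ δ ^ 2) (a : ι → ℝ) :
    |‖∑ i, a i • t i‖ ^ 2 - ∑ i, a i ^ 2| ≤ (2 * δ + δ ^ 2) * ∑ i, a i ^ 2 := by
  have hdiag : ∀ i, |E i i| ≤ δ := fun i =>
    abs_le_of_sq_le_sq ((single_le_sum (fun k _ => sq_nonneg (E k i)) (mem_univ i)).trans
      (hcol i)) hδ
  have hexpand : ‖∑ i, a i • t i‖ ^ 2 - ∑ i, a i ^ 2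
      = ∑ i, ∑ j, a i * a j * E i j ^ 2 + 2 * ∑ i, a i ^ 2 * E i i := by
    have hterm : ∀ i j, a i * a j * (1 + E) i j ^ 2
        = a i * a j * E i j ^ 2 + if i = j then 2 * (a i ^ 2 * E i i) + a i ^ 2 else 0 := by
      intro i j
      by_cases h : i = j
      · subst h; simp only [Matrix.add_apply, Matrix.one_apply_eq, if_true]; ring
      · simp [h]
    simp only [norm_sum_smul_sq_eq_sum_sum, ht, hterm, sum_add_distrib, sum_ite_eq, mem_univ,
      if_true, ← mul_sum]
    ring
  have hdiag_sum : |∑ i, a i ^ 2 * E i i| ≤ δ * ∑ i, a i ^ 2 := by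
    refine (abs_sum_le_sum_abs _ _).trans ?_
    rw [mul_sum]
    refine sum_le_sum fun i _ => ?_
    rw [abs_mul, abs_sq, mul_comm δ]
    exact mul_le_mul_of_nonneg_left (hdiag i) (sq_nonneg _)
  rw [hexpand]
  calc _ ≤ |∑ i, ∑ j, a i * a j * E i j ^ 2| + 2 * |∑ i, a i ^ 2 * E i i| := by
        rw [← abs_two, ← abs_mul, abs_two]; exact abs_add_le _ _
    _ ≤ δ ^ 2 * ∑ i, a i ^ 2 + 2 * (δ * ∑ i, a i ^ 2) := by
        gcongr
        exact abs_sum_sum_mul_mul_sq_le E hrow hcol a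
    _ = (2 * δ + δ ^ 2) * ∑ i, a i ^ 2 := by ring

end GramBounds

theorem sum_sq_apply_le_specNorm_sq {m n : Type*} [Fintype m] [Fintype n] [DecidableEq n]
    (A : Matrix m n ℝ) (j : n) : ∑ i, A i j ^ 2 ≤ specNorm A ^ 2 := by
  have hnorm := (LinearMap.toContinuousLinearMap (Matrix.toEuclideanLin A)).le_opNorm
    (EuclideanSpace.single j (1 : ℝ))
  simp only [PiLp.norm_single, norm_one, mul_one] at hnorm
  calc ∑ i, A i j ^ 2 = ‖Matrix.toEuclideanLin A (EuclideanSpace.single j 1)‖ ^ 2 := by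
        rw [EuclideanSpace.real_norm_sq_eq]; simp
    _ ≤ specNorm A ^ 2 := by gcongr; exact hnorm

theorem inner_eq_sq_sum_mul_of_apply_eq_mul {κ : Type*} [Fintype κ]
    {u w : EuclideanSpace ℝ (κ × κ)} {x y : κ → ℝ}
    (hu : ∀ p, u p = x p.1 * x p.2) (hw : ∀ p, w p = y p.1 * y p.2) :
    ⟪u, w⟫ = (∑ k, x k * y k) ^ 2 := by
  simp only [PiLp.inner_apply, RCLike.inner_apply, conj_trivial, hu, hw, sq, sum_mul_sum,
    Fintype.sum_prod_type]
  congr! 2; ring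

theorem stmt_9 (d n : ℕ) (δ : ℝ) (hδ : δ ≤ 1)
    (C : Matrix (Fin d) (Fin n) ℝ)
    (hC : specNorm (Cᵀ * C - 1) ≤ δ)
    (t : Fin n → EuclideanSpace ℝ (Fin d × Fin d))
    (ht : ∀ i, ∀ p : Fin d × Fin d, t i p = C p.1 i * C p.2 i)
    (V : Submodule ℝ (EuclideanSpace ℝ (Fin d × Fin d)))
    (hV : V = Submodule.span ℝ (Set.range t)) :
    ‖(∑ i, (innerSL ℝ (t i)).smulRight (t i))
        - V.subtypeL.comp (V.orthogonalProjection)‖ ≤ 3 * δ := by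
  subst hV
  have hδ0 : 0 ≤ δ := (norm_nonneg _).trans hC
  set E := Cᵀ * C - 1 with hE
  have hcol : ∀ j, ∑ i, E i j ^ 2 ≤ δ ^ 2 := fun j =>
    (sum_sq_apply_le_specNorm_sq E j).trans (pow_le_pow_left₀ (norm_nonneg _) hC 2)
  have hEsymm : Eᵀ = E := by
    rw [hE, Matrix.transpose_sub, Matrix.transpose_mul, Matrix.transpose_transpose,
      Matrix.transpose_one]
  have hrow : ∀ i, ∑ j, E i j ^ 2 ≤ δ ^ 2 := fun i => by
    rw [← hEsymm]; exact hcol i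
  have hgram : ∀ i j, ⟪t i, t j⟫ = (1 + E) i j ^ 2 := fun i j => by
    rw [hE, add_sub_cancel, Matrix.mul_apply]
    exact inner_eq_sq_sum_mul_of_apply_eq_mul (ht i) (ht j)
  calc _ ≤ 2 * δ + δ ^ 2 := norm_sum_rankOne_sub_starProjection_le (by positivity)
        (abs_norm_sum_smul_sq_sub_le_of_inner_eq_sq E hδ0 hgram hrow hcol)
    _ ≤ 3 * δ := by nlinarith
end

section
/- Let Q and Q̃ be symmetric positive semidefinite D×D matrices, both of rank n ≤ D, with ‖Q − Q̃‖ ≤ δ·σ_n(Q) for some δ ≤ 1/2, where σ_n(Q) is the smallest nonzero singular value of Q. Suppose additionally that the projections onto their column spaces satisfy ‖P_S − P_{S̃}‖ ≤ Cδ, where S, S̃ are the column spaces of Q, Q̃. Then ‖Q(Q⁺ − Q̃⁺)‖ ≤ C'δ for an absolute constant C' (depending only on C); e.g. C' = C + 2 works. -/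
open scoped BigOperators RealInnerProductSpace Matrix

/-- `B` is the Moore–Penrose pseudo-inverse of `A` (the four Penrose conditions). -/
def IsMoorePenrose {m : Type*} [Fintype m] (A B : Matrix m m ℝ) : Prop :=
  A * B * A = A ∧ B * A * B = B ∧ (A * B)ᵀ = A * B ∧ (B * A)ᵀ = B * A

namespace StmtAux

variable {D : ℕ}

lemma apply_le (A : Matrix (Fin D) (Fin D) ℝ) (x : EuclideanSpace ℝ (Fin D)) :
    ‖Matrix.toEuclideanLin A x‖ ≤ specNorm A * ‖x‖ :=
  (LinearMap.toContinuousLinearMap (Matrix.toEuclideanLin A)).le_opNorm x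

lemma specNorm_le (A : Matrix (Fin D) (Fin D) ℝ) {M : ℝ} (hM : 0 ≤ M)
    (h : ∀ x : EuclideanSpace ℝ (Fin D), ‖Matrix.toEuclideanLin A x‖ ≤ M * ‖x‖) :
    specNorm A ≤ M :=
  ContinuousLinearMap.opNorm_le_bound _ hM (fun x => h x)

lemma lin_mul (A B : Matrix (Fin D) (Fin D) ℝ) (x : EuclideanSpace ℝ (Fin D)) :
    Matrix.toEuclideanLin (A * B) x
      = Matrix.toEuclideanLin A (Matrix.toEuclideanLin B x) := by
  simp [Matrix.toEuclideanLin_apply, Matrix.mulVec_mulVec]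

lemma inner_lin_left (A : Matrix (Fin D) (Fin D) ℝ) (h : Aᵀ = A)
    (x y : EuclideanSpace ℝ (Fin D)) :
    ⟪Matrix.toEuclideanLin A x, y⟫ = ⟪x, Matrix.toEuclideanLin A y⟫ := by
  have hA : A.IsHermitian := by
    rwa [Matrix.IsHermitian, Matrix.conjTranspose_eq_transpose_of_trivial]
  exact (Matrix.isHermitian_iff_isSymmetric.mp hA) x y

/-- An orthogonal projection (symmetric idempotent) is a contraction. -/
lemma proj_contraction (P : Matrix (Fin D) (Fin D) ℝ) (hPP : P * P = P) (hPt : Pᵀ = P)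
    (x : EuclideanSpace ℝ (Fin D)) :
    ‖Matrix.toEuclideanLin P x‖ ≤ ‖x‖ := by
  set y := Matrix.toEuclideanLin P x with hy
  have h1 : ⟪y, y⟫ = ⟪x, y⟫ := by
    calc ⟪y, y⟫ = ⟪x, Matrix.toEuclideanLin P y⟫ := inner_lin_left P hPt x y
    _ = ⟪x, Matrix.toEuclideanLin (P * P) x⟫ := by rw [lin_mul]
    _ = ⟪x, y⟫ := by rw [hPP]
  have h2 : ‖y‖ * ‖y‖ ≤ ‖x‖ * ‖y‖ := by
    calc ‖y‖ * ‖y‖ = ⟪y, y⟫ := (real_inner_self_eq_norm_mul_norm y).symm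
    _ = ⟪x, y⟫ := h1
    _ ≤ ‖x‖ * ‖y‖ := real_inner_le_norm x y
  rcases eq_or_lt_of_le (norm_nonneg y) with h | h
  · rw [← h]; exact norm_nonneg x
  · exact le_of_mul_le_mul_right h2 h

lemma parseval (b : OrthonormalBasis (Fin D) ℝ (EuclideanSpace ℝ (Fin D)))
    (x : EuclideanSpace ℝ (Fin D)) :
    ‖x‖ ^ 2 = ∑ i, ⟪b i, x⟫ ^ 2 := by
  have h := b.sum_inner_mul_inner x x
  rw [real_inner_self_eq_norm_sq] at h
  rw [← h]
  congr 1
  ext i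
  rw [real_inner_comm x (b i)]
  ring

end StmtAux

set_option maxHeartbeats 1000000 in
open StmtAux in
theorem stmt_11 (D n : ℕ) (hn : n ≤ D) (c δ σ : ℝ)
    (hc : 0 ≤ c) (hδ0 : 0 ≤ δ) (hδ : δ ≤ 1 / 2)
    (Q Qt : Matrix (Fin D) (Fin D) ℝ)
    (hQ : Q.PosSemidef) (hQt : Qt.PosSemidef)
    (hrQ : Q.rank = n) (hrQt : Qt.rank = n)
    (Qp Qtp : Matrix (Fin D) (Fin D) ℝ)
    (hQp : IsMoorePenrose Q Qp) (hQtp : IsMoorePenrose Qt Qtp)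
    (hσpos : 0 < σ)
    -- `σ` is a lower bound on the nonzero singular values of `Q`
    -- (hence on `σₙ(Q)`, the smallest nonzero singular value):
    (hσ : ∀ x : EuclideanSpace ℝ (Fin D),
      (∀ y : EuclideanSpace ℝ (Fin D), Matrix.toEuclideanLin Q y = 0 → ⟪x, y⟫ = 0) →
        σ * ‖x‖ ≤ ‖Matrix.toEuclideanLin Q x‖)
    (hnear : specNorm (Q - Qt) ≤ δ * σ)
    (hproj : specNorm (Q * Qp - Qt * Qtp) ≤ c * δ) :
    specNorm (Q * (Qp - Qtp)) ≤ (c + 2) * δ := by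
  classical
  set L : Matrix (Fin D) (Fin D) ℝ → (EuclideanSpace ℝ (Fin D) →ₗ[ℝ] EuclideanSpace ℝ (Fin D)) :=
    fun A => Matrix.toEuclideanLin A with hL
  have hQtT : Qtᵀ = Qt := by
    rw [← Matrix.conjTranspose_eq_transpose_of_trivial]; exact hQt.1
  -- eigen data of Qt
  set b := hQt.1.eigenvectorBasis with hb
  set μ := hQt.1.eigenvalues with hμ
  have hμ0 : ∀ i, 0 ≤ μ i := fun i => hQt.eigenvalues_nonneg i
  have hLb : ∀ i, L Qt (b i) = μ i • b i := by
    intro i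
    have h := hQt.1.mulVec_eigenvectorBasis i
    ext j
    have := congrFun h j
    simpa [hL, Matrix.toEuclideanLin_apply] using this
  have hcoefLin : ∀ (i : Fin D) (y : EuclideanSpace ℝ (Fin D)),
      ⟪b i, L Qt y⟫ = μ i * ⟪b i, y⟫ := by
    intro i y
    rw [← inner_lin_left Qt hQtT (b i) y, hLb i, real_inner_smul_left]
  -- ranks
  have hrankQ : Module.finrank ℝ (LinearMap.range (L Q)) = n := by
    rw [← hrQ, Matrix.rank_eq_finrank_range_toLin Q (PiLp.basisFun 2 ℝ (Fin D))
      (PiLp.basisFun 2 ℝ (Fin D))]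
    rfl
  have hrankQt : Module.finrank ℝ (LinearMap.range (L Qt)) = n := by
    rw [← hrQt, Matrix.rank_eq_finrank_range_toLin Qt (PiLp.basisFun 2 ℝ (Fin D))
      (PiLp.basisFun 2 ℝ (Fin D))]
    rfl
  have hD : Module.finrank ℝ (EuclideanSpace ℝ (Fin D)) = D := by
    simp [finrank_euclideanSpace]
  have hkerQ : Module.finrank ℝ (LinearMap.ker (L Q)) = D - n := by
    have := LinearMap.finrank_range_add_finrank_ker (L Q)
    rw [hrankQ, hD] at this
    omega
  have hkerQt : Module.finrank ℝ (LinearMap.ker (L Qt)) = D - n := by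
    have := LinearMap.finrank_range_add_finrank_ker (L Qt)
    rw [hrankQt, hD] at this
    omega
  -- the subspace S := (ker L Q)ᗮ has dimension n
  set S : Submodule ℝ (EuclideanSpace ℝ (Fin D)) := (LinearMap.ker (L Q))ᗮ with hS
  have hSdim : Module.finrank ℝ S = n := by
    have h := Submodule.finrank_add_finrank_orthogonal (K := LinearMap.ker (L Q))
    rw [hkerQ, hD, ← hS] at h
    omega
  -- lower bound for Qt on S
  have hQtS : ∀ x ∈ S, σ / 2 * ‖x‖ ≤ ‖L Qt x‖ := by
    intro x hx
    have hxS : ∀ y : EuclideanSpace ℝ (Fin D), L Q y = 0 → ⟪x, y⟫ = 0 := by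
      intro y hy
      have := (Submodule.mem_orthogonal _ x).mp hx y (LinearMap.mem_ker.mpr hy)
      rwa [real_inner_comm] at this
    have h1 : σ * ‖x‖ ≤ ‖L Q x‖ := hσ x hxS
    have h2 : ‖L Q x - L Qt x‖ ≤ δ * σ * ‖x‖ := by
      have he : L Q x - L Qt x = Matrix.toEuclideanLin (Q - Qt) x := by
        simp [hL, map_sub]
      rw [he]
      calc ‖Matrix.toEuclideanLin (Q - Qt) x‖ ≤ specNorm (Q - Qt) * ‖x‖ := apply_le _ _
      _ ≤ δ * σ * ‖x‖ := mul_le_mul_of_nonneg_right hnear (norm_nonneg x)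
    have h3 : ‖L Q x‖ ≤ ‖L Qt x‖ + ‖L Q x - L Qt x‖ := by
      have := norm_add_le (L Qt x) (L Q x - L Qt x)
      simpa using this
    have h4 : δ * σ * ‖x‖ ≤ 1 / 2 * σ * ‖x‖ :=
      mul_le_mul_of_nonneg_right (mul_le_mul_of_nonneg_right hδ hσpos.le) (norm_nonneg x)
    linarith
  -- eigenvalue gap for Qt : every eigenvalue is 0 or ≥ σ/2
  have hgap : ∀ i, μ i = 0 ∨ σ / 2 ≤ μ i := by
    by_contra hcon
    push_neg at hcon
    obtain ⟨i₀, hi₀0, hi₀⟩ := hcon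
    -- J = small eigenvalues
    set J : Finset (Fin D) := Finset.univ.filter (fun i => μ i < σ / 2) with hJ
    -- V = span of small eigenvectors
    set V : Submodule ℝ (EuclideanSpace ℝ (Fin D)) :=
      Submodule.span ℝ (Set.range (fun j : J => b j)) with hV
    have hli : LinearIndependent ℝ (fun j : J => b j) :=
      (b.orthonormal.linearIndependent).comp _ Subtype.val_injective
    have hVdim : Module.finrank ℝ V = J.card := by
      rw [hV, finrank_span_eq_card hli]
      exact Fintype.card_coe J
    -- coefficients of elements of V vanish off J
    have hVcoef : ∀ y ∈ V, ∀ i, i ∉ J → ⟪b i, y⟫ = 0 := by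
      intro y hy i hi
      induction hy using Submodule.span_induction with
      | mem z hz =>
        obtain ⟨⟨j, hj⟩, rfl⟩ := hz
        have : i ≠ j := fun h => hi (h ▸ hj)
        exact b.orthonormal.2 this
      | zero => simp
      | add z w _ _ hz hw => rw [inner_add_right, hz, hw]; ring
      | smul a z _ hz => rw [inner_smul_right, hz]; ring
    -- V ∩ S = 0
    have hdisj : Disjoint V S := by
      rw [Submodule.disjoint_def]
      intro y hyV hyS
      by_contra hy0
      have h1 : σ / 2 * ‖y‖ ≤ ‖L Qt y‖ := hQtS y hyS
      have h1'' := mul_self_le_mul_self (by positivity : (0:ℝ) ≤ σ / 2 * ‖y‖) h1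
      have h1' : (σ / 2) ^ 2 * ‖y‖ ^ 2 ≤ ‖L Qt y‖ ^ 2 := by nlinarith [h1'']
      have hy2 : ‖y‖ ^ 2 = ∑ i, ⟪b i, y⟫ ^ 2 := parseval b y
      have hLy2 : ‖L Qt y‖ ^ 2 = ∑ i, (μ i * ⟪b i, y⟫) ^ 2 := by
        rw [parseval b (L Qt y)]
        congr 1
        ext i
        rw [hcoefLin]
      have hex : ∃ i, ⟪b i, y⟫ ≠ 0 := by
        by_contra h
        push_neg at h
        have h0 : ‖y‖ ^ 2 = 0 := by rw [hy2]; simp [h]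
        exact hy0 (norm_eq_zero.mp (sq_eq_zero_iff.mp h0))
      obtain ⟨i₁, hi₁⟩ := hex
      have hi₁J : i₁ ∈ J := by
        by_contra h
        exact hi₁ (hVcoef y hyV i₁ h)
      have hstrict : ∑ i, (μ i * ⟪b i, y⟫) ^ 2 < ∑ i, (σ / 2) ^ 2 * ⟪b i, y⟫ ^ 2 := by
        apply Finset.sum_lt_sum
        · intro i _
          by_cases hiJ : i ∈ J
          · have hμi : μ i < σ / 2 := by
              have := Finset.mem_filter.mp hiJ
              exact this.2
            have h' : μ i * μ i ≤ σ / 2 * (σ / 2) := mul_self_le_mul_self (hμ0 i) hμi.le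
            nlinarith [mul_le_mul_of_nonneg_right h' (sq_nonneg ⟪b i, y⟫)]
          · rw [hVcoef y hyV i hiJ]; simp
        · refine ⟨i₁, Finset.mem_univ _, ?_⟩
          have hμi : μ i₁ < σ / 2 := (Finset.mem_filter.mp hi₁J).2
          have hc2 : 0 < ⟪b i₁, y⟫ ^ 2 :=
            lt_of_le_of_ne (sq_nonneg _) (Ne.symm (pow_ne_zero 2 hi₁))
          have h' : μ i₁ * μ i₁ < σ / 2 * (σ / 2) := mul_self_lt_mul_self (hμ0 i₁) hμi
          nlinarith [mul_lt_mul_of_pos_right h' hc2]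
      have hfin : ‖L Qt y‖ ^ 2 < (σ / 2) ^ 2 * ‖y‖ ^ 2 := by
        rw [hLy2, hy2, Finset.mul_sum]
        exact hstrict
      linarith
    have hcard : J.card + n ≤ D := by
      have h := Submodule.finrank_add_finrank_le_of_disjoint hdisj
      rw [hVdim, hSdim, hD] at h
      exact h
    -- zero eigenvalues
    set Z : Finset (Fin D) := Finset.univ.filter (fun i => μ i = 0) with hZ
    have hZJ : Z ⊆ J := by
      intro i hi
      rw [hZ, Finset.mem_filter] at hi
      rw [hJ, Finset.mem_filter]
      exact ⟨Finset.mem_univ i, by rw [hi.2]; positivity⟩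
    -- ker L Qt ⊆ span of zero eigenvectors
    have hker_span : LinearMap.ker (L Qt) ≤
        Submodule.span ℝ (Set.range (fun j : Z => b j)) := by
      intro y hy
      have hy' : L Qt y = 0 := LinearMap.mem_ker.mp hy
      have hcoef : ∀ i, μ i ≠ 0 → ⟪b i, y⟫ = 0 := by
        intro i hμi
        have h := hcoefLin i y
        rw [hy', inner_zero_right] at h
        exact (mul_eq_zero.mp h.symm).resolve_left hμi
      have hrepr := b.sum_repr' y
      rw [← hrepr]
      apply Submodule.sum_mem
      intro i _
      by_cases hμi : μ i = 0
      · apply Submodule.smul_mem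
        apply Submodule.subset_span
        exact ⟨⟨i, by rw [hZ]; simp [hμi]⟩, rfl⟩
      · rw [hcoef i hμi]
        simp
    have hZcard : D - n ≤ Z.card := by
      have hliZ : LinearIndependent ℝ (fun j : Z => b j) :=
        (b.orthonormal.linearIndependent).comp _ Subtype.val_injective
      have h1 : Module.finrank ℝ
          (Submodule.span ℝ (Set.range (fun j : Z => b j))) = Z.card := by
        rw [finrank_span_eq_card hliZ]
        exact Fintype.card_coe Z
      have h2 := Submodule.finrank_mono hker_span
      rw [hkerQt, h1] at h2
      exact h2
    have hZeqJ : Z = J := Finset.eq_of_subset_of_card_le hZJ (by omega)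
    have hi₀J : i₀ ∈ J := by rw [hJ, Finset.mem_filter]; exact ⟨Finset.mem_univ _, hi₀⟩
    rw [← hZeqJ, hZ, Finset.mem_filter] at hi₀J
    exact hi₀0 hi₀J.2
  -- lower bound for Qt on the orthogonal complement of its kernel
  have hQtPerp : ∀ y : EuclideanSpace ℝ (Fin D),
      (∀ z : EuclideanSpace ℝ (Fin D), L Qt z = 0 → ⟪y, z⟫ = 0) →
      σ / 2 * ‖y‖ ≤ ‖L Qt y‖ := by
    intro y hy
    have hy2 : ‖y‖ ^ 2 = ∑ i, ⟪b i, y⟫ ^ 2 := parseval b y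
    have hLy2 : ‖L Qt y‖ ^ 2 = ∑ i, (μ i * ⟪b i, y⟫) ^ 2 := by
      rw [parseval b (L Qt y)]
      congr 1
      ext i
      rw [hcoefLin]
    have hterm : ∀ i, (σ / 2) ^ 2 * ⟪b i, y⟫ ^ 2 ≤ (μ i * ⟪b i, y⟫) ^ 2 := by
      intro i
      rcases hgap i with h | h
      · have hbk : L Qt (b i) = 0 := by rw [hLb i, h]; simp
        have : ⟪b i, y⟫ = 0 := by
          have := hy (b i) hbk
          rwa [real_inner_comm] at this
        rw [this]
        simp
      · have h' : σ / 2 * (σ / 2) ≤ μ i * μ i :=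
          mul_self_le_mul_self (by positivity) h
        nlinarith [mul_le_mul_of_nonneg_right h' (sq_nonneg ⟪b i, y⟫)]
    have hsq : (σ / 2) ^ 2 * ‖y‖ ^ 2 ≤ ‖L Qt y‖ ^ 2 := by
      rw [hy2, hLy2, Finset.mul_sum]
      exact Finset.sum_le_sum fun i _ => hterm i
    have hsq' : (σ / 2 * ‖y‖) ^ 2 ≤ ‖L Qt y‖ ^ 2 := by rw [mul_pow]; exact hsq
    exact le_of_pow_le_pow_left₀ two_ne_zero (norm_nonneg _) hsq'
  -- bound on the pseudo-inverse of Qt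
  have hQtpBound : ∀ x : EuclideanSpace ℝ (Fin D), ‖L Qtp x‖ ≤ 2 / σ * ‖x‖ := by
    intro x
    set y := L Qtp x with hy
    -- y is orthogonal to the kernel of Qt
    have hyperp : ∀ z : EuclideanSpace ℝ (Fin D), L Qt z = 0 → ⟪y, z⟫ = 0 := by
      intro z hz
      have hy' : L (Qtp * Qt) y = y := by
        rw [hy]
        show Matrix.toEuclideanLin (Qtp * Qt) (Matrix.toEuclideanLin Qtp x)
          = Matrix.toEuclideanLin Qtp x
        rw [← lin_mul, hQtp.2.1]
      have hPz : L (Qtp * Qt) z = 0 := by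
        show Matrix.toEuclideanLin (Qtp * Qt) z = 0
        rw [lin_mul]
        rw [show Matrix.toEuclideanLin Qt z = 0 from hz, map_zero]
      calc ⟪y, z⟫ = ⟪L (Qtp * Qt) y, z⟫ := by rw [hy']
      _ = ⟪y, L (Qtp * Qt) z⟫ := inner_lin_left _ hQtp.2.2.2 y z
      _ = 0 := by rw [hPz, inner_zero_right]
    have h1 : σ / 2 * ‖y‖ ≤ ‖L Qt y‖ := hQtPerp y hyperp
    have h2 : ‖L Qt y‖ ≤ ‖x‖ := by
      have he : L Qt y = L (Qt * Qtp) x := by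
        rw [hy]
        show Matrix.toEuclideanLin Qt (Matrix.toEuclideanLin Qtp x)
          = Matrix.toEuclideanLin (Qt * Qtp) x
        rw [lin_mul]
      rw [he]
      apply proj_contraction
      · calc Qt * Qtp * (Qt * Qtp) = Qt * Qtp * Qt * Qtp := by noncomm_ring
        _ = Qt * Qtp := by rw [hQtp.1]
      · exact hQtp.2.2.1
    rw [div_mul_eq_mul_div, le_div_iff₀ hσpos]
    calc ‖L Qtp x‖ * σ = 2 * (σ / 2 * ‖y‖) := by rw [← hy]; ring
    _ ≤ 2 * ‖L Qt y‖ := by linarith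
    _ ≤ 2 * ‖x‖ := by linarith
  have hQtpSpec : specNorm Qtp ≤ 2 / σ :=
    specNorm_le Qtp (by positivity) hQtpBound
  -- final assembly
  have hsplit : Q * (Qp - Qtp) = (Q * Qp - Qt * Qtp) + (Qt - Q) * Qtp := by
    noncomm_ring
  have hfinal : ∀ x : EuclideanSpace ℝ (Fin D),
      ‖Matrix.toEuclideanLin (Q * (Qp - Qtp)) x‖ ≤ (c + 2) * δ * ‖x‖ := by
    intro x
    rw [hsplit]
    have he : Matrix.toEuclideanLin ((Q * Qp - Qt * Qtp) + (Qt - Q) * Qtp) x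
        = Matrix.toEuclideanLin (Q * Qp - Qt * Qtp) x
          + Matrix.toEuclideanLin ((Qt - Q) * Qtp) x := by
      simp [map_add]
    rw [he]
    have hA : ‖Matrix.toEuclideanLin (Q * Qp - Qt * Qtp) x‖ ≤ c * δ * ‖x‖ :=
      le_trans (apply_le _ _) (mul_le_mul_of_nonneg_right hproj (norm_nonneg x))
    have hB : ‖Matrix.toEuclideanLin ((Qt - Q) * Qtp) x‖ ≤ 2 * δ * ‖x‖ := by
      rw [lin_mul]
      calc ‖Matrix.toEuclideanLin (Qt - Q) (Matrix.toEuclideanLin Qtp x)‖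
          ≤ specNorm (Qt - Q) * ‖Matrix.toEuclideanLin Qtp x‖ := apply_le _ _
      _ ≤ (δ * σ) * (2 / σ * ‖x‖) := by
          apply mul_le_mul
          · have : Qt - Q = -(Q - Qt) := (neg_sub Q Qt).symm
            rw [this]
            have hneg : specNorm (-(Q - Qt)) = specNorm (Q - Qt) := by
              unfold specNorm
              rw [map_neg, map_neg, norm_neg]
            rw [hneg]
            exact hnear
          · exact hQtpBound x
          · exact norm_nonneg _
          · positivity
      _ = 2 * δ * ‖x‖ := by field_simp
    calc ‖Matrix.toEuclideanLin (Q * Qp - Qt * Qtp) x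
          + Matrix.toEuclideanLin ((Qt - Q) * Qtp) x‖
        ≤ ‖Matrix.toEuclideanLin (Q * Qp - Qt * Qtp) x‖
          + ‖Matrix.toEuclideanLin ((Qt - Q) * Qtp) x‖ := norm_add_le _ _
    _ ≤ c * δ * ‖x‖ + 2 * δ * ‖x‖ := add_le_add hA hB
    _ = (c + 2) * δ * ‖x‖ := by ring
  exact specNorm_le _ (by positivity) hfinal
end

section
/- Let γ, β, τ ∈ [0, 1/2] and let u, v ∈ ℝ^n satisfy |‖u‖_2^2 − ‖v‖_2^2| ≤ β‖v‖_2^2, ‖u − v‖_2^2 ≤ γ‖v‖_2^2, and ‖v‖_4^4 ≥ (1−τ)‖v‖_2^4. Then ‖u‖_4^4 ≥ (1 − τ − C(√γ + β))·‖u‖_2^4 for an absolute constant C. -/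
/-!
Write `S = ‖v‖₂²`, `T = ‖u‖₂²` and `D = ∑ᵢ |uᵢ² - vᵢ²|`. Factoring `uᵢ² - vᵢ² = (uᵢ - vᵢ)(uᵢ + vᵢ)`,
Cauchy–Schwarz gives `D² ≤ ‖u - v‖₂² ‖u + v‖₂² ≤ γ S (2T + 2S)`, so `D = O(√γ) T`. Each fourth power
moves by `|vᵢ⁴ - uᵢ⁴| = |vᵢ² - uᵢ²| (vᵢ² + uᵢ²) ≤ (T + S) |vᵢ² - uᵢ²|`, hence
`‖u‖₄⁴ ≥ ‖v‖₄⁴ - (T + S) D ≥ (1 - τ) S² - O(√γ) T²`, and `S ≥ (1 - β) T` turns `S²` into `T²`.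
-/

open Finset

namespace FourthPowerPerturbation

variable {ι : Type*} [Fintype ι] (u v : ι → ℝ)

theorem sum_add_sq_le : ∑ i, (u i + v i) ^ 2 ≤ 2 * ∑ i, u i ^ 2 + 2 * ∑ i, v i ^ 2 := by
  rw [mul_sum, mul_sum, ← sum_add_distrib]
  exact sum_le_sum fun i _ => by nlinarith [sq_nonneg (u i - v i)]

theorem sq_sum_abs_sq_sub_sq_le :
    (∑ i, |u i ^ 2 - v i ^ 2|) ^ 2 ≤ (∑ i, (u i - v i) ^ 2) * ∑ i, (u i + v i) ^ 2 := by
  have h := sum_mul_sq_le_sq_mul_sq univ (fun i => |u i - v i|) (fun i => |u i + v i|)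
  simp only [← abs_mul, sq_abs] at h
  have hfactor : ∀ i, (u i - v i) * (u i + v i) = u i ^ 2 - v i ^ 2 := fun i => by ring
  simpa only [hfactor] using h

theorem sum_pow_four_sub_sum_pow_four_le :
    ∑ i, v i ^ 4 - ∑ i, u i ^ 4 ≤ (∑ i, u i ^ 2 + ∑ i, v i ^ 2) * ∑ i, |u i ^ 2 - v i ^ 2| := by
  rw [← sum_sub_distrib, mul_sum]
  refine sum_le_sum fun i _ => ?_
  have hu : u i ^ 2 ≤ ∑ j, u j ^ 2 := single_le_sum (fun j _ => sq_nonneg (u j)) (mem_univ i)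
  have hv : v i ^ 2 ≤ ∑ j, v j ^ 2 := single_le_sum (fun j _ => sq_nonneg (v j)) (mem_univ i)
  calc v i ^ 4 - u i ^ 4 = (v i ^ 2 - u i ^ 2) * (u i ^ 2 + v i ^ 2) := by ring
    _ ≤ |u i ^ 2 - v i ^ 2| * (u i ^ 2 + v i ^ 2) := by
        rw [abs_sub_comm]
        exact mul_le_mul_of_nonneg_right (le_abs_self _) (by positivity)
    _ ≤ (∑ j, u j ^ 2 + ∑ j, v j ^ 2) * |u i ^ 2 - v i ^ 2| := by
        rw [mul_comm]
        gcongr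

theorem sum_abs_sq_sub_sq_le {γ : ℝ} (hγ : 0 ≤ γ)
    (hdist : ∑ i, (u i - v i) ^ 2 ≤ γ * ∑ i, v i ^ 2) (hvu : ∑ i, v i ^ 2 ≤ 2 * ∑ i, u i ^ 2) :
    ∑ i, |u i ^ 2 - v i ^ 2| ≤ 4 * √γ * ∑ i, u i ^ 2 := by
  have hS : 0 ≤ ∑ i, v i ^ 2 := sum_nonneg fun i _ => sq_nonneg (v i)
  have hT : 0 ≤ ∑ i, u i ^ 2 := sum_nonneg fun i _ => sq_nonneg (u i)
  refine le_of_sq_le_sq ?_ (by positivity)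
  calc (∑ i, |u i ^ 2 - v i ^ 2|) ^ 2
      ≤ (γ * ∑ i, v i ^ 2) * (2 * ∑ i, u i ^ 2 + 2 * ∑ i, v i ^ 2) := by
        refine (sq_sum_abs_sq_sub_sq_le u v).trans (mul_le_mul hdist (sum_add_sq_le u v) ?_ ?_)
        · exact sum_nonneg fun i _ => sq_nonneg _
        · positivity
    _ ≤ (γ * (2 * ∑ i, u i ^ 2)) * (6 * ∑ i, u i ^ 2) := by gcongr; linarith
    _ ≤ (4 * √γ * ∑ i, u i ^ 2) ^ 2 := by
        rw [mul_pow, mul_pow, Real.sq_sqrt hγ]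
        nlinarith [mul_nonneg hγ (sq_nonneg (∑ i, u i ^ 2))]

end FourthPowerPerturbation

open FourthPowerPerturbation in
theorem stmt_12 :
    ∃ C : ℝ, 0 < C ∧
      ∀ (n : ℕ) (γ β τ : ℝ), γ ∈ Set.Icc (0 : ℝ) (1 / 2) → β ∈ Set.Icc (0 : ℝ) (1 / 2) →
        τ ∈ Set.Icc (0 : ℝ) (1 / 2) →
        ∀ u v : Fin n → ℝ,
          |(∑ i, u i ^ 2) - ∑ i, v i ^ 2| ≤ β * ∑ i, v i ^ 2 →
          (∑ i, (u i - v i) ^ 2) ≤ γ * ∑ i, v i ^ 2 →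
          (∑ i, v i ^ 4) ≥ (1 - τ) * (∑ i, v i ^ 2) ^ 2 →
          (∑ i, u i ^ 4) ≥ (1 - τ - C * (Real.sqrt γ + β)) * (∑ i, u i ^ 2) ^ 2 := by
  refine ⟨12, by norm_num, ?_⟩
  rintro n γ β τ ⟨hγ, -⟩ ⟨hβ, hβ2⟩ ⟨hτ, hτ1⟩ u v hnorm hdist hv4
  have hD := sum_abs_sq_sub_sq_le u v hγ hdist
  have h4 := sum_pow_four_sub_sum_pow_four_le u v
  have hT : 0 ≤ ∑ i, u i ^ 2 := sum_nonneg fun i _ => sq_nonneg (u i)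
  set S := ∑ i, v i ^ 2
  set T := ∑ i, u i ^ 2
  obtain ⟨hlo, hhi⟩ := abs_le.mp hnorm
  have hTS : (1 - β) * T ≤ S := by nlinarith
  have hST : S ≤ 2 * T := by nlinarith
  specialize hD hST
  calc (1 - τ - 12 * (√γ + β)) * T ^ 2
      ≤ (1 - τ) * ((1 - β) * T) ^ 2 - 3 * T * (4 * √γ * T) := by
        nlinarith [mul_nonneg (mul_nonneg hτ hβ) (sq_nonneg T), mul_nonneg hβ (sq_nonneg T)]
    _ ≤ (1 - τ) * S ^ 2 - (T + S) * ∑ i, |u i ^ 2 - v i ^ 2| := by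
        gcongr
        · linarith
        · nlinarith
        · linarith
    _ ≤ ∑ i, u i ^ 4 := by linarith
end

section
/- Let ε > 0 be sufficiently small, let a_1,...,a_n ∈ ℝ^d be unit vectors with ‖∑_{i=1}^n a_i a_iᵀ‖ ≤ 1+ε, and let u ∈ ℝ^d with ‖u‖ ≤ 1 satisfy ∑_{i=1}^n ⟨a_i,u⟩^4 ≥ 1−ε and ⟨a_j,u⟩^2 ≥ 1/2 for some index j. Then ⟨a_j,u⟩^2 ≥ 1 − 10ε. -/
open scoped BigOperators RealInnerProductSpace

lemma inner_toEuclideanLin_sum_vecMulVec (d n : ℕ) (a : Fin n → EuclideanSpace ℝ (Fin d))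
    (u : EuclideanSpace ℝ (Fin d)) :
    ⟪u, Matrix.toEuclideanLin (∑ i, Matrix.vecMulVec (a i) (a i)) u⟫ =
      ∑ i, ⟪a i, u⟫ ^ 2 := by
  rw [map_sum]
  simp only [LinearMap.coe_sum, Finset.sum_apply, inner_sum]
  refine Finset.sum_congr rfl fun i _ => ?_
  simp only [Matrix.toEuclideanLin_apply, Matrix.mulVec, Matrix.vecMulVec_apply,
    dotProduct, PiLp.inner_apply, RCLike.inner_apply, starRingEnd_apply, star_trivial]
  rw [sq, Finset.sum_mul]
  refine Finset.sum_congr rfl fun k _ => ?_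
  simp only [Matrix.mulVec, dotProduct, Matrix.vecMulVec_apply, Equiv.refl_apply,
    Finset.sum_mul, Finset.mul_sum]
  exact Finset.sum_congr rfl fun l _ => by ring

theorem stmt_13 :
    ∃ ε₀ : ℝ, 0 < ε₀ ∧
      ∀ (ε : ℝ), 0 < ε → ε ≤ ε₀ →
        ∀ (d n : ℕ) (a : Fin n → EuclideanSpace ℝ (Fin d)),
          (∀ i, ‖a i‖ = 1) →
          specNorm (∑ i, Matrix.vecMulVec (a i) (a i)) ≤ 1 + ε →
          ∀ u : EuclideanSpace ℝ (Fin d), ‖u‖ ≤ 1 →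
            (∑ i, ⟪a i, u⟫ ^ 4) ≥ 1 - ε →
            ∀ j : Fin n, ⟪a j, u⟫ ^ 2 ≥ 1 / 2 →
              ⟪a j, u⟫ ^ 2 ≥ 1 - 10 * ε := by
  refine ⟨1/100, by norm_num, fun ε hε hε0 d n a ha hA u hu h4 j hj => ?_⟩
  set T := LinearMap.toContinuousLinearMap
    (Matrix.toEuclideanLin (∑ i, Matrix.vecMulVec (a i) (a i))) with hT
  -- total quadratic form bound
  have hquad : ∑ i, ⟪a i, u⟫ ^ 2 ≤ 1 + ε := by
    have h1 : ∑ i, ⟪a i, u⟫ ^ 2 = ⟪u, T u⟫ :=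
      (inner_toEuclideanLin_sum_vecMulVec d n a u).symm
    have h2 : ⟪u, T u⟫ ≤ ‖u‖ * ‖T u‖ := real_inner_le_norm u (T u)
    have h3 : ‖T u‖ ≤ ‖T‖ * ‖u‖ := T.le_opNorm u
    have hTn : ‖T‖ ≤ 1 + ε := hA
    have hu0 : (0:ℝ) ≤ ‖u‖ := norm_nonneg u
    nlinarith [norm_nonneg (T u), mul_le_mul_of_nonneg_left h3 hu0]
  set t := ⟪a j, u⟫ ^ 2 with htdef
  have ht1 : t ≤ 1 := by
    have := abs_real_inner_le_norm (a j) u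
    rw [ha j, one_mul] at this
    have : ⟪a j, u⟫ ^ 2 ≤ ‖u‖ ^ 2 := by
      rw [← sq_abs]
      exact pow_le_pow_left₀ (abs_nonneg _) this 2
    nlinarith [norm_nonneg u]
  set S := ∑ i ∈ Finset.univ.erase j, ⟪a i, u⟫ ^ 2 with hSdef
  have hS0 : 0 ≤ S := Finset.sum_nonneg fun i _ => sq_nonneg _
  have hsplit : t + S = ∑ i, ⟪a i, u⟫ ^ 2 :=
    Finset.add_sum_erase Finset.univ (fun i => ⟪a i, u⟫ ^ 2) (Finset.mem_univ j)
  have hSle : S ≤ 1 + ε - t := by linarith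
  -- fourth power bound on the rest
  have h4split : ∑ i, ⟪a i, u⟫ ^ 4 = t ^ 2 + ∑ i ∈ Finset.univ.erase j, ⟪a i, u⟫ ^ 4 := by
    rw [(Finset.add_sum_erase Finset.univ (fun i => ⟪a i, u⟫ ^ 4) (Finset.mem_univ j)).symm,
      htdef]
    ring_nf
  have hrest : ∑ i ∈ Finset.univ.erase j, ⟪a i, u⟫ ^ 4 ≤ S ^ 2 := by
    have : ∀ i ∈ Finset.univ.erase j, ⟪a i, u⟫ ^ 4 ≤ ⟪a i, u⟫ ^ 2 * S := by
      intro i hi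
      have hle : ⟪a i, u⟫ ^ 2 ≤ S :=
        Finset.single_le_sum (fun k _ => sq_nonneg (⟪a k, u⟫)) hi
      nlinarith [sq_nonneg (⟪a i, u⟫)]
    calc ∑ i ∈ Finset.univ.erase j, ⟪a i, u⟫ ^ 4
        ≤ ∑ i ∈ Finset.univ.erase j, ⟪a i, u⟫ ^ 2 * S := Finset.sum_le_sum this
      _ = S * S := by rw [← Finset.sum_mul]
      _ = S ^ 2 := by ring
  have hkey : 1 - ε ≤ t ^ 2 + (1 + ε - t) ^ 2 := by
    have hS2 : S ^ 2 ≤ (1 + ε - t) ^ 2 := by nlinarith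
    nlinarith
  by_contra hcon
  push_neg at hcon
  have h12 : (1:ℝ)/2 ≤ t := hj
  nlinarith [mul_nonneg (by linarith : (0:ℝ) ≤ t - 1/2) (by linarith : (0:ℝ) ≤ 1 - 10*ε - t)]
end

section
/- Let a_1,...,a_n ∈ ℝ^d and suppose the n(n−1) vectors {a_i^{⊗2} ⊗ a_j^{⊗2} − (a_i ⊗ a_j)^{⊗2} : i ≠ j} in (ℝ^d)^{⊗4} are linearly independent. Then every vector of the form x^{⊗2} (x ∈ ℝ^d) lying in the linear span of a_1^{⊗2},...,a_n^{⊗2} is a scalar multiple of a_i^{⊗2} for some i. -/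
/-!
Write `x ⊗ x = ∑ αᵢ aᵢ ⊗ aᵢ`. The bilinear map
`B(S, T)(q₁, q₂, q₃, q₄) = S(q₁, q₂) T(q₃, q₄) - S(q₁, q₃) T(q₂, q₄)`
compares the two ways of pairing up the modes of `S ⊗ T`; it vanishes on `(v ⊗ v, v ⊗ v)`, and
`B(aᵢ ⊗ aᵢ, aⱼ ⊗ aⱼ) = aᵢ⊗²⊗aⱼ⊗² - (aᵢ⊗aⱼ)⊗²`. Expanding `0 = B(x ⊗ x, x ⊗ x)` therefore gives
`∑_{i ≠ j} αᵢ αⱼ (aᵢ⊗²⊗aⱼ⊗² - (aᵢ⊗aⱼ)⊗²) = 0`, so linear independence forces `αᵢ αⱼ = 0` for `i ≠ j`: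
at most one coefficient is nonzero.
-/

variable {R κ ι : Type*} [CommRing R]

def selfTensor (v : κ → R) : κ × κ → R := fun q => v q.1 * v q.2

/-- `a⊗²⊗b⊗² - (a⊗b)⊗²`, in the coordinates `(q₁, q₂, q₃, q₄)` of `(κ → R)⊗⁴`. -/
def swapDiff (a b : κ → R) : κ × κ × κ × κ → R := fun q =>
  a q.1 * a q.2.1 * b q.2.2.1 * b q.2.2.2 - a q.1 * b q.2.1 * a q.2.2.1 * b q.2.2.2

theorem swapDiff_self (a : κ → R) : swapDiff a a = 0 := by
  funext q
  simp only [swapDiff, Pi.zero_apply]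
  ring

theorem sum_sum_mul_swapDiff_apply [Fintype ι] {α : ι → R} {a : ι → κ → R} {S : κ × κ → R}
    (hS : ∑ i, α i • selfTensor (a i) = S) (q : κ × κ × κ × κ) :
    ∑ i, ∑ j, α i * α j * swapDiff (a i) (a j) q =
      S (q.1, q.2.1) * S (q.2.2.1, q.2.2.2) - S (q.1, q.2.2.1) * S (q.2.1, q.2.2.2) := by
  subst hS
  obtain ⟨q₁, q₂, q₃, q₄⟩ := q
  simp only [Finset.sum_apply, Pi.smul_apply, smul_eq_mul, selfTensor, swapDiff, Finset.sum_mul_sum,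
    ← Finset.sum_sub_distrib]
  refine Finset.sum_congr rfl fun i _ => Finset.sum_congr rfl fun j _ => ?_
  ring

theorem sum_offDiag_smul_swapDiff_eq_zero [Fintype ι] [DecidableEq ι] {α : ι → R}
    {a : ι → κ → R} {x : κ → R} (hx : ∑ i, α i • selfTensor (a i) = selfTensor x) :
    ∑ p : {p : ι × ι // p.1 ≠ p.2}, (α p.1.1 * α p.1.2) • swapDiff (a p.1.1) (a p.1.2) = 0 := by
  have h_diag : ∑ p : {p : ι × ι // ¬p.1 ≠ p.2},
      (α p.1.1 * α p.1.2) • swapDiff (a p.1.1) (a p.1.2) = 0 :=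
    Finset.sum_eq_zero fun p _ => by rw [not_not.mp p.2, swapDiff_self, smul_zero]
  calc ∑ p : {p : ι × ι // p.1 ≠ p.2}, (α p.1.1 * α p.1.2) • swapDiff (a p.1.1) (a p.1.2)
      = ∑ p : {p : ι × ι // p.1 ≠ p.2}, (α p.1.1 * α p.1.2) • swapDiff (a p.1.1) (a p.1.2)
        + ∑ p : {p : ι × ι // ¬p.1 ≠ p.2}, (α p.1.1 * α p.1.2) • swapDiff (a p.1.1) (a p.1.2) := by
        rw [h_diag, add_zero]
    _ = ∑ p : ι × ι, (α p.1 * α p.2) • swapDiff (a p.1) (a p.2) :=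
        Fintype.sum_subtype_add_sum_subtype (fun p : ι × ι => p.1 ≠ p.2)
          fun p => (α p.1 * α p.2) • swapDiff (a p.1) (a p.2)
    _ = 0 := by
        funext q
        have h_expand := sum_sum_mul_swapDiff_apply hx q
        simp only [selfTensor] at h_expand
        simp only [Finset.sum_apply, Pi.smul_apply, smul_eq_mul, Fintype.sum_prod_type, h_expand,
          Pi.zero_apply]
        ring

theorem mul_eq_zero_of_linearIndependent_swapDiff [Fintype ι] [DecidableEq ι] {a : ι → κ → R}
    (hind : LinearIndependent R fun p : {p : ι × ι // p.1 ≠ p.2} => swapDiff (a p.1.1) (a p.1.2))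
    {α : ι → R} {x : κ → R} (hx : ∑ i, α i • selfTensor (a i) = selfTensor x)
    {i j : ι} (hij : i ≠ j) : α i * α j = 0 :=
  Fintype.linearIndependent_iff.mp hind _ (sum_offDiag_smul_swapDiff_eq_zero hx) ⟨(i, j), hij⟩

theorem exists_sum_smul_eq_smul_of_mul_eq_zero {M : Type*} [AddCommMonoid M] [Module R M]
    [NoZeroDivisors R] [Fintype ι] [Nonempty ι] {α : ι → R}
    (h : ∀ i j, i ≠ j → α i * α j = 0) (v : ι → M) : ∃ i, ∑ j, α j • v j = α i • v i := by
  by_cases h_zero : ∀ i, α i = 0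
  · exact ⟨Classical.arbitrary ι, by simp [h_zero]⟩
  obtain ⟨i, hi⟩ := not_forall.mp h_zero
  refine ⟨i, Finset.sum_eq_single i (fun j _ hji => ?_) (by simp)⟩
  rw [(mul_eq_zero.mp (h j i hji)).resolve_right hi, zero_smul]

theorem stmt_16 (d n : ℕ) (hn : 0 < n) (a : Fin n → Fin d → ℝ)
    (hind : LinearIndependent ℝ
      (fun p : {p : Fin n × Fin n // p.1 ≠ p.2} =>
        (fun q : Fin d × Fin d × Fin d × Fin d =>
          a p.1.1 q.1 * a p.1.1 q.2.1 * a p.1.2 q.2.2.1 * a p.1.2 q.2.2.2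
            - a p.1.1 q.1 * a p.1.2 q.2.1 * a p.1.1 q.2.2.1 * a p.1.2 q.2.2.2)))
    (x : Fin d → ℝ)
    (hx : (fun q : Fin d × Fin d => x q.1 * x q.2) ∈
      Submodule.span ℝ (Set.range fun i => (fun q : Fin d × Fin d => a i q.1 * a i q.2))) :
    ∃ (i : Fin n) (c : ℝ),
      (fun q : Fin d × Fin d => x q.1 * x q.2)
        = c • (fun q : Fin d × Fin d => a i q.1 * a i q.2) := by
  obtain ⟨α, hα⟩ := (Submodule.mem_span_range_iff_exists_fun ℝ).mp hx
  have : Nonempty (Fin n) := ⟨⟨0, hn⟩⟩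
  obtain ⟨i, hi⟩ := exists_sum_smul_eq_smul_of_mul_eq_zero
    (fun _ _ hij => mul_eq_zero_of_linearIndependent_swapDiff hind hα hij)
    (fun i => selfTensor (a i))
  exact ⟨i, α i, hα.symm.trans hi⟩
end

section
/- Let ε ∈ (0,1/3), let δ ≤ ε, let s be a positive integer, and let α_1,...,α_s > 0 and κ ≥ 0 satisfy κ ≤ δ·α_j for every j. Then for every real x: x^2·∏_{j=1}^s (α_j x^2 + κ) ≤ (∏_{j=1}^s α_j)·((1−ε)^s x^2 + (1+3δ)^s x^{2s+2}). -/
/-!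
Each factor `α_j x² + κ` is compared with a multiple of `α_j` or of `α_j x²`, according to
whether `x²` is small or large. For `x² ≤ 1 - 2ε` the factor is at most
`(1 - 2ε + δ) α_j ≤ (1 - ε) α_j`; for `x² ≥ 1 - 2ε > 1/3` we have `κ ≤ δ α_j ≤ 3δ α_j x²`.
Multiplying the factors gives one of the two terms on the right, and the other term is
nonnegative.
-/

theorem Finset.prod_le_pow_card_mul_prod {ι R : Type*} [CommMonoidWithZero R] [Preorder R]
    [ZeroLEOneClass R] [PosMulMono R] {s : Finset ι} {f g : ι → R} {c : R}
    (h0 : ∀ i ∈ s, 0 ≤ f i) (h : ∀ i ∈ s, f i ≤ c * g i) :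
    ∏ i ∈ s, f i ≤ c ^ s.card * ∏ i ∈ s, g i :=
  calc ∏ i ∈ s, f i ≤ ∏ i ∈ s, c * g i := Finset.prod_le_prod h0 h
    _ = c ^ s.card * ∏ i ∈ s, g i := by rw [Finset.prod_mul_distrib, Finset.prod_const]

section Factor

variable {ε δ a κ x : ℝ}

theorem mul_sq_add_le_of_sq_le (ha : 0 < a) (hκ : κ ≤ δ * a) (hδε : δ ≤ ε)
    (hx : x ^ 2 ≤ 1 - 2 * ε) : a * x ^ 2 + κ ≤ (1 - ε) * a := by
  have hax : a * x ^ 2 ≤ a * (1 - 2 * ε) := mul_le_mul_of_nonneg_left hx ha.le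
  have hδa : δ * a ≤ ε * a := mul_le_mul_of_nonneg_right hδε ha.le
  linarith

theorem mul_sq_add_le_of_le_three_mul_sq (ha : 0 ≤ a) (hδ : 0 ≤ δ) (hκ : κ ≤ δ * a)
    (hx : 1 ≤ 3 * x ^ 2) : a * x ^ 2 + κ ≤ (1 + 3 * δ) * (a * x ^ 2) := by
  have : δ * a * 1 ≤ δ * a * (3 * x ^ 2) := mul_le_mul_of_nonneg_left hx (by positivity)
  linarith

end Factor

theorem stmt_17_general (ε δ : ℝ) (hε : ε ∈ Set.Ioo (0 : ℝ) (1 / 3)) (hδ0 : 0 ≤ δ) (hδε : δ ≤ ε)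
    (s : ℕ) (α : Fin s → ℝ) (hα : ∀ j, 0 < α j)
    (κ : ℝ) (hκ0 : 0 ≤ κ) (hκ : ∀ j, κ ≤ δ * α j) (x : ℝ) :
    x ^ 2 * ∏ j, (α j * x ^ 2 + κ)
      ≤ (∏ j, α j) * ((1 - ε) ^ s * x ^ 2 + (1 + 3 * δ) ^ s * x ^ (2 * s + 2)) := by
  obtain ⟨-, hε⟩ := hε
  have hA : 0 ≤ ∏ j, α j := Finset.prod_nonneg fun j _ => (hα j).le
  have hfactor : ∀ j ∈ Finset.univ, 0 ≤ α j * x ^ 2 + κ := fun j _ =>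
    add_nonneg (mul_nonneg (hα j).le (sq_nonneg x)) hκ0
  have hlow : 0 ≤ (1 - ε) ^ s * x ^ 2 := mul_nonneg (pow_nonneg (by linarith) _) (sq_nonneg x)
  have hhigh : 0 ≤ (1 + 3 * δ) ^ s * x ^ (2 * s + 2) :=
    mul_nonneg (pow_nonneg (by linarith) _) (Even.pow_nonneg ⟨s + 1, by ring⟩ x)
  rcases le_or_gt (x ^ 2) (1 - 2 * ε) with hx | hx
  · have hP := Finset.prod_le_pow_card_mul_prod hfactor fun j _ =>
      mul_sq_add_le_of_sq_le (hα j) (hκ j) hδε hx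
    rw [Finset.card_univ, Fintype.card_fin] at hP
    calc x ^ 2 * ∏ j, (α j * x ^ 2 + κ) ≤ x ^ 2 * ((1 - ε) ^ s * ∏ j, α j) :=
          mul_le_mul_of_nonneg_left hP (sq_nonneg x)
      _ = (∏ j, α j) * ((1 - ε) ^ s * x ^ 2) := by ring
      _ ≤ _ := mul_le_mul_of_nonneg_left (le_add_of_nonneg_right hhigh) hA
  · have hP := Finset.prod_le_pow_card_mul_prod hfactor fun j _ =>
      mul_sq_add_le_of_le_three_mul_sq (hα j).le hδ0 (hκ j) (by linarith)
    rw [← Finset.prod_mul_pow_card, Finset.card_univ, Fintype.card_fin] at hP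
    calc x ^ 2 * ∏ j, (α j * x ^ 2 + κ)
        ≤ x ^ 2 * ((1 + 3 * δ) ^ s * ((∏ j, α j) * (x ^ 2) ^ s)) :=
          mul_le_mul_of_nonneg_left hP (sq_nonneg x)
      _ = (∏ j, α j) * ((1 + 3 * δ) ^ s * x ^ (2 * s + 2)) := by ring
      _ ≤ _ := mul_le_mul_of_nonneg_left (le_add_of_nonneg_left hlow) hA

theorem stmt_17 (ε δ : ℝ) (hε : ε ∈ Set.Ioo (0 : ℝ) (1 / 3)) (hδ0 : 0 ≤ δ) (hδε : δ ≤ ε)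
    (s : ℕ) (hs : 0 < s) (α : Fin s → ℝ) (hα : ∀ j, 0 < α j)
    (κ : ℝ) (hκ0 : 0 ≤ κ) (hκ : ∀ j, κ ≤ δ * α j) (x : ℝ) :
    x ^ 2 * ∏ j, (α j * x ^ 2 + κ)
      ≤ (∏ j, α j) * ((1 - ε) ^ s * x ^ 2 + (1 + 3 * δ) ^ s * x ^ (2 * s + 2)) :=
  stmt_17_general ε δ hε hδ0 hδε s α hα κ hκ0 hκ x
end

section
/- Let a ∈ ℝ^d be a unit vector, let M be a real symmetric d×d matrix, and write P_1 = a aᵀ and P_{−1} = Id − a aᵀ. Suppose max{‖P_{−1} M P_{−1}‖, ‖P_1 M P_{−1}‖} ≤ ε·(aᵀ M a) for some ε with aᵀMa > 0. Then a is within Euclidean distance 3√2·ε of a top eigenvector of M (for an appropriate sign choice of the unit-norm top eigenvector). -/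
open scoped BigOperators RealInnerProductSpace

lemma inner_dot {d : ℕ} (x y : EuclideanSpace ℝ (Fin d)) :
    ⟪x, y⟫ = dotProduct (x : Fin d → ℝ) (y : Fin d → ℝ) := by
  simp [PiLp.inner_apply, dotProduct, RCLike.inner_apply, mul_comm]

lemma dot_mulVec_le {d : ℕ} (N : Matrix (Fin d) (Fin d) ℝ) (x y : EuclideanSpace ℝ (Fin d)) :
    |dotProduct (x : Fin d → ℝ) (N.mulVec y)| ≤ specNorm N * ‖x‖ * ‖y‖ := by
  have h1 : dotProduct (x : Fin d → ℝ) (N.mulVec y)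
      = ⟪x, Matrix.toEuclideanLin N y⟫ := by
    rw [inner_dot]; rfl
  rw [h1]
  calc |⟪x, Matrix.toEuclideanLin N y⟫| ≤ ‖x‖ * ‖Matrix.toEuclideanLin N y‖ :=
        abs_real_inner_le_norm _ _
    _ ≤ ‖x‖ * (specNorm N * ‖y‖) := by
        apply mul_le_mul_of_nonneg_left _ (norm_nonneg x)
        exact (LinearMap.toContinuousLinearMap (Matrix.toEuclideanLin N)).le_opNorm y
    _ = specNorm N * ‖x‖ * ‖y‖ := by ring

lemma dot_symm {d : ℕ} {M : Matrix (Fin d) (Fin d) ℝ} (hM : M.IsSymm)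
    (x y : Fin d → ℝ) :
    dotProduct x (M.mulVec y) = dotProduct y (M.mulVec x) := by
  rw [Matrix.dotProduct_mulVec, ← Matrix.mulVec_transpose, hM.eq, dotProduct_comm]

lemma rayleigh_expand {d : ℕ} {M : Matrix (Fin d) (Fin d) ℝ} (hM : M.IsSymm)
    (hH : M.IsHermitian) (x : EuclideanSpace ℝ (Fin d)) :
    dotProduct (x : Fin d → ℝ) (M.mulVec x)
      = ∑ i, hH.eigenvalues i * ⟪x, hH.eigenvectorBasis i⟫ ^ 2 := by
  have key : ∀ i : Fin d, dotProduct (x : Fin d → ℝ) (M.mulVec (hH.eigenvectorBasis i))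
      = hH.eigenvalues i * ⟪x, hH.eigenvectorBasis i⟫ := by
    intro i
    erw [hH.mulVec_eigenvectorBasis, dotProduct_smul, smul_eq_mul, ← inner_dot]
  have h1 : dotProduct (x : Fin d → ℝ) (M.mulVec x) = ⟪x, Matrix.toEuclideanLin M x⟫ := by
    rw [inner_dot]; rfl
  rw [h1, ← hH.eigenvectorBasis.sum_inner_mul_inner x (Matrix.toEuclideanLin M x)]
  apply Finset.sum_congr rfl
  intro i _
  have h2 : ⟪hH.eigenvectorBasis i, Matrix.toEuclideanLin M x⟫
      = dotProduct (hH.eigenvectorBasis i : Fin d → ℝ) (M.mulVec x) := by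
    rw [inner_dot]; rfl
  rw [h2, dot_symm hM, key i, real_inner_comm]
  ring

lemma vecMulVec_mulVec' {d : ℕ} (a z : Fin d → ℝ) :
    (Matrix.vecMulVec a a).mulVec z = (dotProduct a z) • a := by
  funext i
  simp only [Matrix.mulVec, Matrix.vecMulVec_apply, dotProduct, Pi.smul_apply,
    smul_eq_mul, Finset.sum_mul, Finset.mul_sum]
  apply Finset.sum_congr rfl
  intros; ring

set_option maxHeartbeats 1000000 in
theorem stmt_18 (d : ℕ) (ε : ℝ) (hε : 0 ≤ ε)
    (a : EuclideanSpace ℝ (Fin d)) (ha : ‖a‖ = 1)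
    (M : Matrix (Fin d) (Fin d) ℝ) (hM : M.IsSymm)
    (P₁ Pm : Matrix (Fin d) (Fin d) ℝ)
    (hP₁ : P₁ = Matrix.vecMulVec a a) (hPm : Pm = 1 - Matrix.vecMulVec a a)
    (ht : 0 < dotProduct (a : Fin d → ℝ) (M.mulVec a))
    (hnoise : max (specNorm (Pm * M * Pm)) (specNorm (P₁ * M * Pm))
      ≤ ε * dotProduct (a : Fin d → ℝ) (M.mulVec a)) :
    ∃ (μ : ℝ) (v : EuclideanSpace ℝ (Fin d)), ‖v‖ = 1 ∧
      M.mulVec v = μ • (v : Fin d → ℝ) ∧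
      (∀ x : EuclideanSpace ℝ (Fin d),
        dotProduct (x : Fin d → ℝ) (M.mulVec x) ≤ μ * ‖x‖ ^ 2) ∧
      ‖a - v‖ ≤ 3 * Real.sqrt 2 * ε := by
  classical
  have hH : M.IsHermitian := by
    rw [Matrix.IsHermitian]
    ext i j
    simp only [Matrix.conjTranspose_apply, star_trivial]
    exact hM.apply i j
  set t := dotProduct (a : Fin d → ℝ) (M.mulVec a) with htdef
  have hne : Nonempty (Fin d) := by
    rcases Nat.eq_zero_or_pos d with h0 | h0
    · exfalso
      have : t = 0 := by
        subst h0; simp [htdef, dotProduct]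
      linarith
    · exact ⟨⟨0, h0⟩⟩
  obtain ⟨i₀, hi₀⟩ := Finite.exists_max hH.eigenvalues
  set μ := hH.eigenvalues i₀ with hμdef
  have hcnorm : ∀ x : EuclideanSpace ℝ (Fin d),
      ∑ i, ⟪x, hH.eigenvectorBasis i⟫ ^ 2 = ‖x‖ ^ 2 := by
    intro x
    have h := hH.eigenvectorBasis.sum_inner_mul_inner x x
    rw [real_inner_self_eq_norm_sq] at h
    rw [← h]
    apply Finset.sum_congr rfl
    intro i _
    rw [sq, real_inner_comm x (hH.eigenvectorBasis i)]
  have hray : ∀ x : EuclideanSpace ℝ (Fin d),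
      dotProduct (x : Fin d → ℝ) (M.mulVec x) ≤ μ * ‖x‖ ^ 2 := by
    intro x
    rw [rayleigh_expand hM hH x]
    calc ∑ i, hH.eigenvalues i * ⟪x, hH.eigenvectorBasis i⟫ ^ 2
        ≤ ∑ i, μ * ⟪x, hH.eigenvectorBasis i⟫ ^ 2 :=
          Finset.sum_le_sum fun i _ => mul_le_mul_of_nonneg_right (hi₀ i) (sq_nonneg _)
      _ = μ * ∑ i, ⟪x, hH.eigenvectorBasis i⟫ ^ 2 := by rw [Finset.mul_sum]
      _ = μ * ‖x‖ ^ 2 := by rw [hcnorm]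
  have hv₀ev : M.mulVec (hH.eigenvectorBasis i₀ : Fin d → ℝ)
      = μ • ((hH.eigenvectorBasis i₀ : EuclideanSpace ℝ (Fin d)) : Fin d → ℝ) :=
    hH.mulVec_eigenvectorBasis i₀
  have hv₀n : ‖hH.eigenvectorBasis i₀‖ = 1 := hH.eigenvectorBasis.orthonormal.1 i₀
  obtain ⟨v, hv1, hvev, hc0⟩ : ∃ v : EuclideanSpace ℝ (Fin d), ‖v‖ = 1 ∧
      M.mulVec (v : Fin d → ℝ) = μ • (v : Fin d → ℝ) ∧ 0 ≤ ⟪a, v⟫ := by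
    rcases le_or_gt 0 ⟪a, hH.eigenvectorBasis i₀⟫ with h | h
    · exact ⟨_, hv₀n, hv₀ev, h⟩
    · refine ⟨-(hH.eigenvectorBasis i₀), by simp [hv₀n], ?_, ?_⟩
      · show M.mulVec (-(hH.eigenvectorBasis i₀ : Fin d → ℝ)) = _
        rw [Matrix.mulVec_neg, hv₀ev]
        funext i; simp
      · rw [inner_neg_right]; linarith
  refine ⟨μ, v, hv1, hvev, hray, ?_⟩
  set c := ⟪a, v⟫ with hcdef
  have hc1 : c ≤ 1 := by
    have h := real_inner_le_norm a v
    rw [ha, hv1] at h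
    simpa using h
  set w : EuclideanSpace ℝ (Fin d) := v - c • a with hwdef
  have haa : dotProduct (a : Fin d → ℝ) (a : Fin d → ℝ) = 1 := by
    rw [← inner_dot, real_inner_self_eq_norm_sq, ha]; norm_num
  have hawdot : dotProduct (a : Fin d → ℝ) (w : Fin d → ℝ) = 0 := by
    rw [← inner_dot, hwdef, inner_sub_right, real_inner_smul_right,
      real_inner_self_eq_norm_sq, ha]
    simp [hcdef]
  have hwn : ‖w‖ ^ 2 = 1 - c ^ 2 := by
    have h5 : (inner ℝ v a : ℝ) = c := by rw [real_inner_comm]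
    rw [hwdef, norm_sub_sq_real, real_inner_smul_right, norm_smul, hv1, ha, h5]
    simp only [Real.norm_eq_abs, mul_one, one_pow]
    rw [sq_abs]
    ring
  have hw1 : ‖w‖ ≤ 1 := by nlinarith [norm_nonneg w, sq_nonneg c]
  have hN1 : specNorm (P₁ * M * Pm) ≤ ε * t := le_trans (le_max_right _ _) hnoise
  have hNm : specNorm (Pm * M * Pm) ≤ ε * t := le_trans (le_max_left _ _) hnoise
  have hPmw : Pm.mulVec (w : Fin d → ℝ) = (w : Fin d → ℝ) := by
    rw [hPm, Matrix.sub_mulVec, Matrix.one_mulVec, vecMulVec_mulVec', hawdot]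
    simp
  set q := dotProduct (a : Fin d → ℝ) (M.mulVec (w : Fin d → ℝ)) with hqdef
  set r := dotProduct (w : Fin d → ℝ) (M.mulVec (w : Fin d → ℝ)) with hrdef
  have hq : |q| ≤ ε * t * ‖w‖ := by
    have e1 : q = dotProduct (a : Fin d → ℝ) ((P₁ * M * Pm).mulVec (w : Fin d → ℝ)) := by
      rw [← Matrix.mulVec_mulVec, ← Matrix.mulVec_mulVec, hPmw, hP₁, vecMulVec_mulVec',
        dotProduct_smul, haa, hqdef]
      simp
    rw [e1]
    calc |dotProduct (a : Fin d → ℝ) ((P₁ * M * Pm).mulVec (w : Fin d → ℝ))|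
        ≤ specNorm (P₁ * M * Pm) * ‖a‖ * ‖w‖ := dot_mulVec_le _ a w
      _ ≤ ε * t * ‖w‖ := by
          rw [ha, mul_one]
          exact mul_le_mul_of_nonneg_right hN1 (norm_nonneg w)
  have hr : |r| ≤ ε * t * (‖w‖ * ‖w‖) := by
    have e1 : r = dotProduct (w : Fin d → ℝ) ((Pm * M * Pm).mulVec (w : Fin d → ℝ)) := by
      rw [← Matrix.mulVec_mulVec, ← Matrix.mulVec_mulVec, hPmw, hPm, Matrix.sub_mulVec,
        Matrix.one_mulVec, vecMulVec_mulVec', dotProduct_sub, dotProduct_smul,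
        ← dotProduct_comm (a : Fin d → ℝ) (w : Fin d → ℝ), hawdot, hrdef]
      simp
    rw [e1]
    calc |dotProduct (w : Fin d → ℝ) ((Pm * M * Pm).mulVec (w : Fin d → ℝ))|
        ≤ specNorm (Pm * M * Pm) * ‖w‖ * ‖w‖ := dot_mulVec_le _ w w
      _ ≤ ε * t * (‖w‖ * ‖w‖) := by
          rw [← mul_assoc]
          exact mul_le_mul_of_nonneg_right
            (mul_le_mul_of_nonneg_right hNm (norm_nonneg w)) (norm_nonneg w)
  have hμt : t ≤ μ := by
    have h := hray a
    rw [ha] at h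
    simpa [htdef] using h
  have hvf : (v : Fin d → ℝ) = (w : Fin d → ℝ) + c • (a : Fin d → ℝ) := by
    funext i
    simp [hwdef]
  have hexp : dotProduct (v : Fin d → ℝ) (M.mulVec (v : Fin d → ℝ))
      = c ^ 2 * t + 2 * c * q + r := by
    have hsymm := dot_symm hM (w : Fin d → ℝ) (a : Fin d → ℝ)
    rw [hvf]
    rw [Matrix.mulVec_add, Matrix.mulVec_smul, add_dotProduct, smul_dotProduct,
      dotProduct_add, dotProduct_add, dotProduct_smul,
      dotProduct_smul, hsymm]
    simp only [smul_eq_mul, htdef, hqdef, hrdef]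
    ring
  have hvMv : dotProduct (v : Fin d → ℝ) (M.mulVec (v : Fin d → ℝ)) = μ := by
    rw [hvev, dotProduct_smul, smul_eq_mul, ← inner_dot,
      real_inner_self_eq_norm_sq, hv1]
    norm_num
  have key : t * ‖w‖ ^ 2 ≤ t * (ε * (2 * c * ‖w‖ + ‖w‖ ^ 2)) := by
    have h1 : t ≤ c ^ 2 * t + 2 * c * q + r := by rw [← hexp, hvMv]; exact hμt
    have hq' : q ≤ ε * t * ‖w‖ := le_trans (le_abs_self q) hq
    have hr' : r ≤ ε * t * (‖w‖ * ‖w‖) := le_trans (le_abs_self r) hr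
    have p1 : 2 * c * q ≤ 2 * c * (ε * t * ‖w‖) :=
      mul_le_mul_of_nonneg_left hq' (by linarith)
    calc t * ‖w‖ ^ 2 = t - c ^ 2 * t := by rw [hwn]; ring
      _ ≤ 2 * c * q + r := by linarith
      _ ≤ 2 * c * (ε * t * ‖w‖) + ε * t * (‖w‖ * ‖w‖) := by linarith
      _ = t * (ε * (2 * c * ‖w‖ + ‖w‖ ^ 2)) := by ring
  have key2 : ‖w‖ ^ 2 ≤ ε * (2 * c * ‖w‖ + ‖w‖ ^ 2) :=
    le_of_mul_le_mul_left key ht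
  clear_value t μ c w
  have hwle : ‖w‖ ≤ 3 * ε := by
    rcases eq_or_lt_of_le (norm_nonneg w) with h0 | h0
    · rw [← h0]; positivity
    · have step : ‖w‖ * ‖w‖ ≤ 3 * ε * ‖w‖ := by
        nlinarith [key2, mul_nonneg hε (mul_nonneg (sub_nonneg.2 hc1) (norm_nonneg w)),
          mul_nonneg hε (mul_nonneg (norm_nonneg w) (sub_nonneg.2 hw1))]
      exact le_of_mul_le_mul_right step h0
  have hav : ‖a - v‖ ^ 2 = 2 - 2 * c := by
    rw [norm_sub_sq_real, ha, hv1, ← hcdef]; ring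
  have h2' : ‖a - v‖ ^ 2 ≤ 18 * ε ^ 2 := by
    have hww : ‖w‖ * ‖w‖ ≤ (3 * ε) * (3 * ε) :=
      mul_le_mul hwle hwle (norm_nonneg w) (by positivity)
    nlinarith [hwn, hc0, hc1, hav, mul_nonneg hc0 (sub_nonneg.2 hc1), hww]
  have h3 : (3 * Real.sqrt 2 * ε) ^ 2 = 18 * ε ^ 2 := by
    rw [mul_pow, mul_pow, Real.sq_sqrt (by norm_num : (2:ℝ) ≥ 0)]
    ring
  have h4 : ‖a - v‖ = Real.sqrt (‖a - v‖ ^ 2) := (Real.sqrt_sq (norm_nonneg _)).symm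
  rw [h4]
  calc Real.sqrt (‖a - v‖ ^ 2) ≤ Real.sqrt ((3 * Real.sqrt 2 * ε) ^ 2) :=
        Real.sqrt_le_sqrt (by linarith)
    _ = 3 * Real.sqrt 2 * ε := Real.sqrt_sq (by positivity)
end

section
/- Let D be a finitely supported probability distribution on vectors u ∈ ℝ^d with ‖u‖ ≤ 1, let a ∈ ℝ^d be a unit vector, let k ≥ 4 be an even integer, and let P_{−1} = Id − a aᵀ. Then the spectral norm of E_{u∼D}[⟨a,u⟩^k · (P_{−1}u)(P_{−1}u)ᵀ] is at most (2/(k−2))·‖E_{u∼D}[u uᵀ]‖. -/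
open scoped BigOperators RealInnerProductSpace

lemma inner_vmv (d : ℕ) (p q : Fin d → ℝ) (x y : EuclideanSpace ℝ (Fin d)) :
    ⟪(Matrix.toEuclideanLin (Matrix.vecMulVec p q)) x, y⟫ =
      (∑ l, q l * x l) * (∑ j, p j * y j) := by
  simp [Matrix.toEuclideanLin_apply, PiLp.inner_apply, Matrix.mulVec, Matrix.vecMulVec,
    dotProduct, Finset.sum_mul, Finset.mul_sum]
  apply Finset.sum_congr rfl; intro l _
  apply Finset.sum_congr rfl; intro j _
  ring

lemma inner_sum_vmv {ι : Type*} [Fintype ι] (d : ℕ) (cf : ι → ℝ) (p : ι → Fin d → ℝ)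
    (x y : EuclideanSpace ℝ (Fin d)) :
    ⟪(Matrix.toEuclideanLin (∑ i, cf i • Matrix.vecMulVec (p i) (p i))) x, y⟫ =
      ∑ i, cf i * ((∑ l, p i l * x l) * (∑ j, p i j * y j)) := by
  rw [map_sum, LinearMap.sum_apply, sum_inner]
  apply Finset.sum_congr rfl; intro i _
  rw [map_smul, LinearMap.smul_apply, real_inner_smul_left, inner_vmv]

lemma sum_sq_eq_norm_sq {d : ℕ} (x : EuclideanSpace ℝ (Fin d)) :
    ∑ l, (x l) ^ 2 = ‖x‖ ^ 2 := by
  rw [← real_inner_self_eq_norm_sq]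
  rw [PiLp.inner_apply]
  exact Finset.sum_congr rfl fun l _ => by simp only [RCLike.inner_apply, conj_trivial]; ring

lemma specNorm_sum_vmv_le {ι : Type*} [Fintype ι] {d : ℕ} (c : ι → ℝ) (hc : ∀ i, 0 ≤ c i)
    (v : ι → Fin d → ℝ) :
    specNorm (∑ i, c i • Matrix.vecMulVec (v i) (v i)) ≤ ∑ i, c i * (∑ l, (v i l) ^ 2) := by
  set C := ∑ i, c i * (∑ l, (v i l) ^ 2) with hCdef
  have hC0 : 0 ≤ C :=
    Finset.sum_nonneg fun i _ => mul_nonneg (hc i) (Finset.sum_nonneg fun l _ => sq_nonneg _)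
  have hG : ∀ x : EuclideanSpace ℝ (Fin d),
      ∑ i, c i * (∑ l, v i l * x l) ^ 2 ≤ C * ‖x‖ ^ 2 := by
    intro x
    rw [hCdef, Finset.sum_mul]
    apply Finset.sum_le_sum; intro i _
    rw [mul_assoc]
    apply mul_le_mul_of_nonneg_left _ (hc i)
    calc (∑ l, v i l * x l) ^ 2 ≤ (∑ l, (v i l) ^ 2) * ∑ l, (x l) ^ 2 :=
          Finset.sum_mul_sq_le_sq_mul_sq Finset.univ (v i) x
      _ = (∑ l, (v i l) ^ 2) * ‖x‖ ^ 2 := by rw [sum_sq_eq_norm_sq x]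
  have hQ : ∀ x y : EuclideanSpace ℝ (Fin d),
      ⟪(Matrix.toEuclideanLin (∑ i, c i • Matrix.vecMulVec (v i) (v i))) x, y⟫ ≤
        C * (‖x‖ * ‖y‖) := by
    intro x y
    rw [inner_sum_vmv]
    set gx : ι → ℝ := fun i => ∑ l, v i l * x l with hgx
    set gy : ι → ℝ := fun i => ∑ l, v i l * y l with hgy
    have hcs : (∑ i, c i * (gx i * gy i)) ^ 2 ≤
        (∑ i, c i * gx i ^ 2) * (∑ i, c i * gy i ^ 2) := by
      have h := Finset.sum_mul_sq_le_sq_mul_sq Finset.univ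
        (fun i => Real.sqrt (c i) * gx i) (fun i => Real.sqrt (c i) * gy i)
      have e1 : ∑ i, (Real.sqrt (c i) * gx i) * (Real.sqrt (c i) * gy i)
          = ∑ i, c i * (gx i * gy i) := by
        apply Finset.sum_congr rfl; intro i _
        linear_combination (gx i * gy i) * (Real.mul_self_sqrt (hc i))
      have e2 : ∑ i, (Real.sqrt (c i) * gx i) ^ 2 = ∑ i, c i * gx i ^ 2 := by
        apply Finset.sum_congr rfl; intro i _
        rw [mul_pow, Real.sq_sqrt (hc i)]
      have e3 : ∑ i, (Real.sqrt (c i) * gy i) ^ 2 = ∑ i, c i * gy i ^ 2 := by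
        apply Finset.sum_congr rfl; intro i _
        rw [mul_pow, Real.sq_sqrt (hc i)]
      rw [e1, e2, e3] at h
      exact h
    have h1 := hG x
    have h2 := hG y
    have hgx0 : 0 ≤ ∑ i, c i * gx i ^ 2 :=
      Finset.sum_nonneg fun i _ => mul_nonneg (hc i) (sq_nonneg _)
    have hgy0 : 0 ≤ ∑ i, c i * gy i ^ 2 :=
      Finset.sum_nonneg fun i _ => mul_nonneg (hc i) (sq_nonneg _)
    have hx0 := norm_nonneg x
    have hy0 := norm_nonneg y
    nlinarith [hcs, mul_le_mul h1 h2 hgy0 (mul_nonneg hC0 (sq_nonneg ‖x‖)),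
      sq_nonneg (∑ i, c i * (gx i * gy i) + C * (‖x‖ * ‖y‖)),
      mul_nonneg (mul_nonneg hC0 hx0) hy0]
  unfold specNorm
  apply ContinuousLinearMap.opNorm_le_bound _ hC0
  intro x
  rw [LinearMap.coe_toContinuousLinearMap']
  set z := (Matrix.toEuclideanLin (∑ i, c i • Matrix.vecMulVec (v i) (v i))) x with hz
  have hq := hQ x z
  rw [← hz] at hq
  have hzz : ⟪z, z⟫ = ‖z‖ ^ 2 := real_inner_self_eq_norm_sq z
  have hz0 := norm_nonneg z
  rcases eq_or_lt_of_le hz0 with h | h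
  · rw [← h]; exact mul_nonneg hC0 (norm_nonneg x)
  · nlinarith [hq, hzz]

lemma aux_pow (n : ℕ) (hn : 1 ≤ n) (r : ℝ) (h0 : 0 ≤ r) (h1 : r ≤ 1) :
    r ^ n * (1 - r) ≤ 1 / n := by
  have h1r : (0:ℝ) ≤ 1 - r := by linarith
  have hgeo : (1 - r) * ∑ j ∈ Finset.range (n+1), r ^ j = 1 - r ^ (n+1) := by
    have := geom_sum_mul r (n+1)
    linear_combination -this
  have h3 : ((n:ℝ)+1) * r ^ n ≤ ∑ j ∈ Finset.range (n+1), r ^ j := by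
    calc ((n:ℝ)+1) * r ^ n = ∑ _j ∈ Finset.range (n+1), r ^ n := by
          simp [Finset.sum_const]
      _ ≤ ∑ j ∈ Finset.range (n+1), r ^ j :=
          Finset.sum_le_sum fun j hj =>
            pow_le_pow_of_le_one h0 h1 (Nat.le_of_lt_succ (Finset.mem_range.mp hj))
  have key : r ^ n * (1 - r) * ((n:ℝ)+1) ≤ 1 := by
    have h4 := mul_le_mul_of_nonneg_left h3 h1r
    rw [hgeo] at h4
    nlinarith [pow_nonneg h0 (n+1)]
  have hnpos : (0:ℝ) < n := by exact_mod_cast hn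
  rw [le_div_iff₀ hnpos]
  nlinarith [mul_nonneg (pow_nonneg h0 n) h1r]

theorem stmt_19 (d : ℕ) (ι : Type*) [Fintype ι]
    (w : ι → ℝ) (hw : ∀ i, 0 ≤ w i) (hw1 : ∑ i, w i = 1)
    (u : ι → EuclideanSpace ℝ (Fin d)) (hu : ∀ i, ‖u i‖ ≤ 1)
    (a : EuclideanSpace ℝ (Fin d)) (ha : ‖a‖ = 1)
    (k : ℕ) (hk : Even k) (hk4 : 4 ≤ k)
    (Pm : Matrix (Fin d) (Fin d) ℝ) (hPm : Pm = 1 - Matrix.vecMulVec a a) :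
    specNorm (∑ i, (w i * ⟪a, u i⟫ ^ k) •
        Matrix.vecMulVec (Pm.mulVec (u i)) (Pm.mulVec (u i)))
      ≤ (2 / ((k : ℝ) - 2)) * specNorm (∑ i, w i • Matrix.vecMulVec (u i) (u i)) := by
  obtain ⟨m, hm⟩ := hk
  have hm2 : 2 ≤ m := by omega
  set n : ℕ := m - 1 with hn
  have hn1 : 1 ≤ n := by omega
  have hkn : k = 2 * (n + 1) := by omega
  have hKval : 2 / ((k : ℝ) - 2) = 1 / n := by
    rw [hkn]
    push_cast
    have hnp : (0:ℝ) < n := by exact_mod_cast hn1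
    rw [show 2 * ((n:ℝ) + 1) - 2 = 2 * n by ring, div_eq_div_iff (by positivity) hnp.ne']
    ring
  have hK0 : 0 ≤ 2 / ((k : ℝ) - 2) := by
    rw [hKval]; positivity
  have hc : ∀ i, 0 ≤ w i * ⟪a, u i⟫ ^ k := fun i =>
    mul_nonneg (hw i) (by rw [hkn, pow_mul]; positivity)
  have htsum : ∀ i, (⟪a, u i⟫ : ℝ) = ∑ l, a l * u i l := fun i => by
    simp [PiLp.inner_apply, mul_comm]
  have hvl : ∀ i l, Pm.mulVec (u i) l = u i l - ⟪a, u i⟫ * a l := by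
    intro i l
    rw [hPm, Matrix.sub_mulVec, Matrix.one_mulVec, htsum]
    simp [Matrix.mulVec, Matrix.vecMulVec, dotProduct, Finset.mul_sum, mul_comm, mul_assoc,
      mul_left_comm]
  have hnorma : ∑ l, (a l) ^ 2 = 1 := by
    rw [sum_sq_eq_norm_sq a, ha]; norm_num
  have hN : ∀ i, ∑ l, (Pm.mulVec (u i) l) ^ 2 = ‖u i‖ ^ 2 - ⟪a, u i⟫ ^ 2 := by
    intro i
    have e : ∀ l, (Pm.mulVec (u i) l) ^ 2 =
        (u i l) ^ 2 - 2 * ⟪a, u i⟫ * (a l * u i l) + ⟪a, u i⟫ ^ 2 * (a l) ^ 2 := by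
      intro l; rw [hvl]; ring
    rw [Finset.sum_congr rfl fun l _ => e l]
    rw [Finset.sum_add_distrib, Finset.sum_sub_distrib, ← Finset.mul_sum, ← Finset.mul_sum,
      sum_sq_eq_norm_sq (u i), hnorma, ← htsum]
    ring
  have hu1 : ∀ i, ‖u i‖ ^ 2 ≤ 1 := fun i => by nlinarith [hu i, norm_nonneg (u i)]
  have hr1 : ∀ i, (⟪a, u i⟫ : ℝ) ^ 2 ≤ 1 := by
    intro i
    have h1 := abs_real_inner_le_norm a (u i)
    have h2 : |(⟪a, u i⟫ : ℝ)| ≤ 1 := by rw [ha] at h1; nlinarith [hu i, abs_nonneg (⟪a, u i⟫ : ℝ)]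
    nlinarith [sq_abs (⟪a, u i⟫ : ℝ), abs_nonneg (⟪a, u i⟫ : ℝ)]
  -- the per-term scalar bound
  have hscal : ∀ i, (w i * ⟪a, u i⟫ ^ k) * (∑ l, (Pm.mulVec (u i) l) ^ 2) ≤
      (2 / ((k : ℝ) - 2)) * (w i * ⟪a, u i⟫ ^ 2) := by
    intro i
    rw [hN i, hKval]
    set r : ℝ := ⟪a, u i⟫ ^ 2 with hrdef
    have hr0 : 0 ≤ r := sq_nonneg _
    have hrk : (⟪a, u i⟫ : ℝ) ^ k = r ^ (n + 1) := by
      rw [hrdef, ← pow_mul, hkn, Nat.mul_comm]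
    have haux := aux_pow n hn1 r hr0 (hr1 i)
    have hps : r ^ (n + 1) = r ^ n * r := pow_succ r n
    have hnpos : (0:ℝ) < n := by exact_mod_cast hn1
    rw [hrk, hps]
    have h1 : w i * (r * (r ^ n * (1 - r))) ≤ w i * (r * (1 / n)) :=
      mul_le_mul_of_nonneg_left (mul_le_mul_of_nonneg_left haux hr0) (hw i)
    nlinarith [hu1 i, mul_nonneg (mul_nonneg (hw i) (pow_nonneg hr0 n)) hr0,
      mul_nonneg (hw i) (mul_nonneg (pow_nonneg hr0 n) hr0)]
  -- bound s by specNorm of B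
  have hsB : ∑ i, w i * ⟪a, u i⟫ ^ 2 ≤ specNorm (∑ i, w i • Matrix.vecMulVec (u i) (u i)) := by
    have e : ⟪(Matrix.toEuclideanLin (∑ i, w i • Matrix.vecMulVec (u i) (u i))) a, a⟫ =
        ∑ i, w i * ⟪a, u i⟫ ^ 2 := by
      rw [inner_sum_vmv]
      apply Finset.sum_congr rfl; intro i _
      have e2 : ∑ l, u i l * a l = (⟪a, u i⟫ : ℝ) := by
        rw [htsum]
        exact Finset.sum_congr rfl fun l _ => mul_comm _ _
      rw [e2]; ring
    rw [← e]
    calc ⟪(Matrix.toEuclideanLin (∑ i, w i • Matrix.vecMulVec (u i) (u i))) a, a⟫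
        ≤ ‖(Matrix.toEuclideanLin (∑ i, w i • Matrix.vecMulVec (u i) (u i))) a‖ * ‖a‖ :=
          real_inner_le_norm _ _
      _ ≤ (specNorm (∑ i, w i • Matrix.vecMulVec (u i) (u i)) * ‖a‖) * ‖a‖ := by
          apply mul_le_mul_of_nonneg_right _ (norm_nonneg a)
          have := (LinearMap.toContinuousLinearMap
            (Matrix.toEuclideanLin (∑ i, w i • Matrix.vecMulVec (u i) (u i)))).le_opNorm a
          rw [LinearMap.coe_toContinuousLinearMap'] at this
          exact this
      _ = specNorm (∑ i, w i • Matrix.vecMulVec (u i) (u i)) := by rw [ha]; ring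
  calc specNorm (∑ i, (w i * ⟪a, u i⟫ ^ k) •
        Matrix.vecMulVec (Pm.mulVec (u i)) (Pm.mulVec (u i)))
      ≤ ∑ i, (w i * ⟪a, u i⟫ ^ k) * (∑ l, (Pm.mulVec (u i) l) ^ 2) :=
        specNorm_sum_vmv_le _ hc _
    _ ≤ ∑ i, (2 / ((k : ℝ) - 2)) * (w i * ⟪a, u i⟫ ^ 2) :=
        Finset.sum_le_sum fun i _ => hscal i
    _ = (2 / ((k : ℝ) - 2)) * ∑ i, w i * ⟪a, u i⟫ ^ 2 := by rw [Finset.mul_sum]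
    _ ≤ (2 / ((k : ℝ) - 2)) * specNorm (∑ i, w i • Matrix.vecMulVec (u i) (u i)) :=
        mul_le_mul_of_nonneg_left hsB hK0
end
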